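/- arXiv:1905.02101 — 5 statements merged into one kernel-verified Lean document; each statement's English description precedes it below -/
import Mathlib

section
/- For any real numbers α > -1, β > -1, any c > 0, and C > 1, there exist constants depending only on α, β, c, C such that for every integer n ≥ 1 and every real t with 1/C ≤ t ≤ 1 - c/n, the sum ∑_{j=1}^{n} (n+1-j)^β j^α t^j is bounded above and below by constant multiples of n^β (1-t)^{-(α+1)}. -/
/-!
Write `u = (1 - t)⁻¹`. The series `∑ j^α t^j` has size `u^(α+1)`, its mass sitting at `j ≍ u`.

For the upper bound, on `j ≤ n/2` the factor `(n+1-j)^β` is `≍ n^β`, which leaves the series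
`∑ j^α t^j`; on `j > n/2` the factor `j^α t^j` is at most a constant times `n^α √t^n`, and
`n^(α+1) √t^n ≲ u^(α+1)` because `x^a e^(-x)` is bounded.

For the lower bound, `t ≤ 1 - c/n` says `u ≲ n`, so for a small constant `a` the block
`A ≤ j < 2A` with `A = ⌈a u⌉` lies in `[1, n/2 + 1)`. On it every term is `≳ n^β u^α` (with
`t^j ≥ e^(-3C)` since `t ≥ 1/C`), and there are `≳ u` of them.
-/

open Finset Real

lemma rpow_le_max_mul_rpow (γ : ℝ) {a b L x : ℝ} (ha : 0 < a) (hL : 0 < L)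
    (hax : a * L ≤ x) (hxb : x ≤ b * L) : x ^ γ ≤ max (a ^ γ) (b ^ γ) * L ^ γ := by
  have hx : 0 < x := (mul_pos ha hL).trans_le hax
  rcases le_total 0 γ with hγ | hγ
  · calc x ^ γ ≤ (b * L) ^ γ := rpow_le_rpow hx.le hxb hγ
      _ = b ^ γ * L ^ γ := mul_rpow (by nlinarith) hL.le
      _ ≤ _ := by gcongr; exact le_max_right _ _
  · calc x ^ γ ≤ (a * L) ^ γ := rpow_le_rpow_of_nonpos (by positivity) hax hγ
      _ = a ^ γ * L ^ γ := mul_rpow ha.le hL.le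
      _ ≤ _ := by gcongr; exact le_max_left _ _

lemma min_mul_rpow_le_rpow (γ : ℝ) {a b L x : ℝ} (ha : 0 < a) (hL : 0 < L)
    (hax : a * L ≤ x) (hxb : x ≤ b * L) : min (a ^ γ) (b ^ γ) * L ^ γ ≤ x ^ γ := by
  have hx : 0 < x := (mul_pos ha hL).trans_le hax
  rcases le_total 0 γ with hγ | hγ
  · calc min (a ^ γ) (b ^ γ) * L ^ γ ≤ a ^ γ * L ^ γ := by gcongr; exact min_le_left _ _
      _ = (a * L) ^ γ := (mul_rpow ha.le hL.le).symm
      _ ≤ x ^ γ := rpow_le_rpow (by positivity) hax hγ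
  · calc min (a ^ γ) (b ^ γ) * L ^ γ ≤ b ^ γ * L ^ γ := by gcongr; exact min_le_right _ _
      _ = (b * L) ^ γ := (mul_rpow (by nlinarith) hL.le).symm
      _ ≤ x ^ γ := rpow_le_rpow_of_nonpos hx hxb hγ

/-- Bernoulli's inequality `(1 - 1/y) ^ p ≤ 1 - p / y`, multiplied by `y ^ p`. -/
lemma sub_one_rpow_add_mul_rpow_sub_one_le {p y : ℝ} (hp0 : 0 ≤ p) (hp1 : p ≤ 1) (hy : 1 ≤ y) :
    (y - 1) ^ p + p * y ^ (p - 1) ≤ y ^ p := by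
  have hy0 : 0 < y := by linarith
  have hb := rpow_one_add_le_one_add_mul_self (s := -y⁻¹)
    (by simpa using inv_le_one_of_one_le₀ hy) hp0 hp1
  rw [show 1 + -y⁻¹ = (y - 1) / y by field_simp; ring, div_rpow (by linarith) hy0.le,
    div_le_iff₀ (by positivity)] at hb
  rw [rpow_sub_one hy0.ne']
  calc (y - 1) ^ p + p * (y ^ p / y) ≤ (1 + p * -y⁻¹) * y ^ p + p * (y ^ p / y) := by gcongr
    _ = y ^ p := by field_simp; ring

lemma sum_Icc_rpow_le {γ : ℝ} (hγ : -1 < γ) :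
    ∃ K, 0 < K ∧ ∀ J : ℕ, ∑ j ∈ Icc 1 J, (j : ℝ) ^ γ ≤ K * (J : ℝ) ^ (γ + 1) := by
  rcases le_or_gt 0 γ with hγ0 | hγ0
  · refine ⟨1, one_pos, fun J => ?_⟩
    calc ∑ j ∈ Icc 1 J, (j : ℝ) ^ γ ≤ ∑ _j ∈ Icc 1 J, (J : ℝ) ^ γ :=
          sum_le_sum fun j hj => by gcongr; exact_mod_cast (mem_Icc.mp hj).2
      _ = 1 * (J : ℝ) ^ (γ + 1) := by
          rcases J.eq_zero_or_pos with rfl | hJ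
          · simp [zero_rpow (by linarith : γ + 1 ≠ 0)]
          · rw [sum_const, Nat.card_Icc, nsmul_eq_mul, rpow_add_one (by positivity)]
            simp [mul_comm]
  · have hp : 0 < γ + 1 := by linarith
    refine ⟨(γ + 1)⁻¹, inv_pos.mpr hp, fun J => ?_⟩
    induction J with
    | zero => simp [zero_rpow (by linarith : γ + 1 ≠ 0)]
    | succ J ih =>
      rw [sum_Icc_succ_top (by omega)]
      have key := sub_one_rpow_add_mul_rpow_sub_one_le (p := γ + 1) (by linarith) (by linarith)
        (by simp : (1 : ℝ) ≤ J + 1)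
      push_cast
      simp only [add_sub_cancel_right] at key
      calc ∑ j ∈ Icc 1 J, (j : ℝ) ^ γ + ((J : ℝ) + 1) ^ γ
          ≤ (γ + 1)⁻¹ * (J : ℝ) ^ (γ + 1) + ((J : ℝ) + 1) ^ γ := by gcongr
        _ = (γ + 1)⁻¹ * ((J : ℝ) ^ (γ + 1) + (γ + 1) * ((J : ℝ) + 1) ^ γ) := by
          field_simp
        _ ≤ (γ + 1)⁻¹ * ((J : ℝ) + 1) ^ (γ + 1) := by gcongr

lemma sum_Icc_reflect {M : Type*} [AddCommMonoid M] (f : ℝ → M) (n : ℕ) :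
    ∑ j ∈ Icc 1 n, f ((n : ℝ) + 1 - j) = ∑ j ∈ Icc 1 n, f j := by
  refine sum_nbij' (fun j => n + 1 - j) (fun j => n + 1 - j) ?_ ?_ ?_ ?_ ?_ <;>
    intro j hj <;> simp only [mem_Icc] at hj ⊢
  · omega
  · omega
  · omega
  · omega
  · rw [Nat.cast_sub (by omega)]; push_cast; ring_nf

lemma rpow_mul_rpow_le {a x r : ℝ} (ha : 0 ≤ a) (hx : 0 ≤ x) (hr0 : 0 ≤ r) (hr1 : r < 1) :
    x ^ a * r ^ x ≤ (a / (1 - r)) ^ a := by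
  have hr : r ^ x ≤ exp (-((1 - r) * x)) := by
    rw [show -((1 - r) * x) = (r - 1) * x by ring, exp_mul]
    exact rpow_le_rpow hr0 (by linarith [add_one_le_exp (r - 1)]) hx
  have hxa := ProbabilityTheory.rpow_abs_le_mul_exp_abs x ha (t := 1 - r) (by linarith)
  rw [abs_of_nonneg hx, abs_of_pos (by linarith)] at hxa
  calc x ^ a * r ^ x ≤ (a / (1 - r)) ^ a * exp ((1 - r) * x) * exp (-((1 - r) * x)) := by
        gcongr
    _ = (a / (1 - r)) ^ a := by rw [mul_assoc, ← exp_add]; simp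

lemma inv_one_sub_sqrt_le {t : ℝ} (ht0 : 0 ≤ t) (ht1 : t < 1) :
    (1 - √t)⁻¹ ≤ 2 * (1 - t)⁻¹ := by
  have hρ1 : √t < 1 := (sqrt_lt' one_pos).mpr (by linarith)
  rw [inv_le_comm₀ (by linarith) (by positivity), mul_inv, inv_inv]
  nlinarith [sq_sqrt ht0, sq_nonneg (√t - 1)]

lemma rpow_mul_sqrt_pow_le {a t : ℝ} (ha : 0 ≤ a) (ht0 : 0 ≤ t) (ht1 : t < 1) (n : ℕ) :
    (n : ℝ) ^ a * √t ^ n ≤ (2 * a) ^ a * (1 - t)⁻¹ ^ a := by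
  have hρ1 : √t < 1 := (sqrt_lt' one_pos).mpr (by linarith)
  calc (n : ℝ) ^ a * √t ^ n ≤ (a / (1 - √t)) ^ a := by
        simpa [rpow_natCast] using rpow_mul_rpow_le ha (Nat.cast_nonneg n) (sqrt_nonneg t) hρ1
    _ ≤ (a * (2 * (1 - t)⁻¹)) ^ a := by
        rw [div_eq_mul_inv]
        exact rpow_le_rpow (mul_nonneg ha (inv_nonneg.mpr (by linarith)))
          (mul_le_mul_of_nonneg_left (inv_one_sub_sqrt_le ht0 ht1) ha) ha
    _ = (2 * a) ^ a * (1 - t)⁻¹ ^ a := by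
        rw [mul_left_comm, ← mul_assoc, mul_rpow (by positivity) (inv_nonneg.mpr (by linarith))]

lemma exp_mul_one_sub_inv_le_pow {t : ℝ} (ht : 0 < t) (j : ℕ) : exp (j * (1 - t⁻¹)) ≤ t ^ j := by
  rw [← exp_log (pow_pos ht j), log_pow]
  gcongr
  exact one_sub_inv_le_log_of_pos ht

lemma sum_rpow_mul_pow_le_of_nonneg {α t : ℝ} (hα : 0 ≤ α) (ht0 : 0 ≤ t) (ht1 : t < 1)
    (s : Finset ℕ) : ∑ j ∈ s, (j : ℝ) ^ α * t ^ j ≤ 2 * (2 * α) ^ α * (1 - t)⁻¹ ^ (α + 1) := by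
  have hu : 0 < (1 - t)⁻¹ := by simpa using ht1
  have hρ1 : √t < 1 := (sqrt_lt' one_pos).mpr (by linarith)
  calc ∑ j ∈ s, (j : ℝ) ^ α * t ^ j = ∑ j ∈ s, ((j : ℝ) ^ α * √t ^ j) * √t ^ j := by
        refine sum_congr rfl fun j _ => ?_
        rw [mul_assoc, ← mul_pow, mul_self_sqrt ht0]
    _ ≤ ∑ j ∈ s, (2 * α) ^ α * (1 - t)⁻¹ ^ α * √t ^ j :=
        sum_le_sum fun j _ =>
          mul_le_mul_of_nonneg_right (rpow_mul_sqrt_pow_le hα ht0 ht1 j) (by positivity)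
    _ ≤ (2 * α) ^ α * (1 - t)⁻¹ ^ α * (2 * (1 - t)⁻¹) := by
        rw [← mul_sum]
        gcongr
        exact (sum_le_hasSum s (fun j _ => by positivity)
          (hasSum_geometric_of_lt_one (sqrt_nonneg t) hρ1)).trans (inv_one_sub_sqrt_le ht0 ht1)
    _ = 2 * (2 * α) ^ α * (1 - t)⁻¹ ^ (α + 1) := by
        rw [rpow_add_one hu.ne']
        ring

lemma sum_Icc_rpow_mul_pow_le_of_neg {α : ℝ} (hα : -1 < α) (hα0 : α < 0) :
    ∃ K, 0 < K ∧ ∀ N : ℕ, ∀ t, 0 ≤ t → t < 1 →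
      ∑ j ∈ Icc 1 N, (j : ℝ) ^ α * t ^ j ≤ K * (1 - t)⁻¹ ^ (α + 1) := by
  obtain ⟨K, hK, hsum⟩ := sum_Icc_rpow_le hα
  refine ⟨K * 2 ^ (α + 1) + 1, by positivity, fun N t ht0 ht1 => ?_⟩
  set u := (1 - t)⁻¹
  have hu : 1 ≤ u := one_le_inv₀ (by linarith) |>.mpr (by linarith)
  set J := ⌈u⌉₊
  have hJu : u ≤ J := Nat.le_ceil u
  have hJ2u : (J : ℝ) ≤ 2 * u := by linarith [Nat.ceil_lt_add_one (zero_le_one.trans hu)]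
  rw [← sum_filter_add_sum_filter_not _ (· ≤ J)]
  have hhead : ∑ j ∈ (Icc 1 N).filter (· ≤ J), (j : ℝ) ^ α * t ^ j
      ≤ K * 2 ^ (α + 1) * u ^ (α + 1) :=
    calc ∑ j ∈ (Icc 1 N).filter (· ≤ J), (j : ℝ) ^ α * t ^ j
        ≤ ∑ j ∈ (Icc 1 N).filter (· ≤ J), (j : ℝ) ^ α :=
          sum_le_sum fun j _ => mul_le_of_le_one_right (by positivity) (pow_le_one₀ ht0 ht1.le)
      _ ≤ ∑ j ∈ Icc 1 J, (j : ℝ) ^ α := by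
          refine sum_le_sum_of_subset_of_nonneg (fun j hj => ?_) fun j _ _ => by positivity
          simp only [mem_filter, mem_Icc] at hj ⊢
          omega
      _ ≤ K * (2 * u) ^ (α + 1) := (hsum J).trans (by gcongr; linarith)
      _ = K * 2 ^ (α + 1) * u ^ (α + 1) := by rw [mul_rpow zero_le_two (by positivity), mul_assoc]
  have htail : ∑ j ∈ (Icc 1 N).filter (¬ · ≤ J), (j : ℝ) ^ α * t ^ j ≤ u ^ (α + 1) :=
    calc ∑ j ∈ (Icc 1 N).filter (¬ · ≤ J), (j : ℝ) ^ α * t ^ j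
        ≤ ∑ j ∈ (Icc 1 N).filter (¬ · ≤ J), u ^ α * t ^ j := by
          refine sum_le_sum fun j hj => mul_le_mul_of_nonneg_right ?_ (by positivity)
          refine rpow_le_rpow_of_nonpos (by positivity) (hJu.trans ?_) hα0.le
          exact_mod_cast (not_le.mp (mem_filter.mp hj).2).le
      _ ≤ u ^ α * u := by
          rw [← mul_sum]
          gcongr
          exact sum_le_hasSum _ (fun j _ => by positivity) (hasSum_geometric_of_lt_one ht0 ht1)
      _ = u ^ (α + 1) := (rpow_add_one (by positivity) α).symm
  linarith

lemma sum_Icc_rpow_mul_pow_le {α : ℝ} (hα : -1 < α) :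
    ∃ K, 0 < K ∧ ∀ N : ℕ, ∀ t, 0 ≤ t → t < 1 →
      ∑ j ∈ Icc 1 N, (j : ℝ) ^ α * t ^ j ≤ K * (1 - t)⁻¹ ^ (α + 1) := by
  rcases lt_or_ge α 0 with hα0 | hα0
  · exact sum_Icc_rpow_mul_pow_le_of_neg hα hα0
  · refine ⟨_, ?_, fun N t ht0 ht1 => sum_rpow_mul_pow_le_of_nonneg hα0 ht0 ht1 _⟩
    rcases hα0.eq_or_lt with rfl | hα0
    · simp
    · positivity

noncomputable def weightedPowerSum (α β : ℝ) (n : ℕ) (t : ℝ) : ℝ :=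
  ∑ j ∈ Icc 1 n, ((n : ℝ) + 1 - j) ^ β * (j : ℝ) ^ α * t ^ j

lemma rpow_mul_rpow_mul_pow_le_add {α β t : ℝ} {n j : ℕ} (hn0 : (0 : ℝ) < n) (hj1 : 1 ≤ j)
    (hjn : j ≤ n) (ht0 : 0 ≤ t) (ht1 : t ≤ 1) :
    ((n : ℝ) + 1 - j) ^ β * (j : ℝ) ^ α * t ^ j ≤
      max ((1 / 2 : ℝ) ^ β) (1 ^ β) * n ^ β * ((j : ℝ) ^ α * t ^ j)
        + max ((1 / 2 : ℝ) ^ α) (1 ^ α) * n ^ α * √t ^ n * ((n : ℝ) + 1 - j) ^ β := by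
  have hj1' : (1 : ℝ) ≤ j := by exact_mod_cast hj1
  have hjn' : (j : ℝ) ≤ n := by exact_mod_cast hjn
  have hβnn : 0 ≤ ((n : ℝ) + 1 - j) ^ β := rpow_nonneg (by linarith) β
  by_cases h2j : 2 * j ≤ n
  · have h2j' : 2 * (j : ℝ) ≤ n := by exact_mod_cast h2j
    have := rpow_le_max_mul_rpow β one_half_pos hn0 (x := n + 1 - j) (b := 1)
      (by linarith) (by linarith)
    calc ((n : ℝ) + 1 - j) ^ β * (j : ℝ) ^ α * t ^ j
        ≤ max ((1 / 2 : ℝ) ^ β) (1 ^ β) * n ^ β * ((j : ℝ) ^ α * t ^ j) := by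
          rw [mul_assoc]; gcongr
      _ ≤ _ := le_add_of_nonneg_right (by positivity)
  · have h2j' : (n : ℝ) ≤ 2 * j := by exact_mod_cast (not_le.mp h2j).le
    have hα := rpow_le_max_mul_rpow α one_half_pos hn0 (x := j) (b := 1)
      (by linarith) (by linarith)
    have ht : t ^ j ≤ √t ^ n := calc
      t ^ j = √t ^ (2 * j) := by rw [pow_mul, sq_sqrt ht0]
      _ ≤ √t ^ n := pow_le_pow_of_le_one (sqrt_nonneg t) (sqrt_le_one.mpr ht1) (by omega)
    calc ((n : ℝ) + 1 - j) ^ β * (j : ℝ) ^ α * t ^ j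
        ≤ ((n : ℝ) + 1 - j) ^ β * (max ((1 / 2 : ℝ) ^ α) (1 ^ α) * n ^ α) * √t ^ n := by
          gcongr
      _ ≤ _ := by
          linarith [show 0 ≤ max ((1 / 2 : ℝ) ^ β) (1 ^ β) * n ^ β * ((j : ℝ) ^ α * t ^ j) by
            positivity]

lemma weightedPowerSum_le {α β : ℝ} (hα : -1 < α) (hβ : -1 < β) :
    ∃ K, 0 < K ∧ ∀ n : ℕ, 0 < n → ∀ t, 0 ≤ t → t < 1 →
      weightedPowerSum α β n t ≤ K * (n : ℝ) ^ β * (1 - t)⁻¹ ^ (α + 1) := by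
  obtain ⟨K₁, hK₁, hpoly⟩ := sum_Icc_rpow_mul_pow_le hα
  obtain ⟨K₂, hK₂, hpart⟩ := sum_Icc_rpow_le hβ
  set Mα := max ((1 / 2 : ℝ) ^ α) (1 ^ α)
  set Mβ := max ((1 / 2 : ℝ) ^ β) (1 ^ β)
  set E := (2 * (α + 1)) ^ (α + 1)
  have hE : 0 < E := rpow_pos_of_pos (by linarith) _
  refine ⟨Mβ * K₁ + Mα * K₂ * E, by positivity, fun n hn t ht0 ht1 => ?_⟩
  have hn0 : (0 : ℝ) < n := by exact_mod_cast hn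
  set u := (1 - t)⁻¹
  have htail : (n : ℝ) ^ α * √t ^ n * n ^ (β + 1) ≤ E * n ^ β * u ^ (α + 1) :=
    calc (n : ℝ) ^ α * √t ^ n * n ^ (β + 1) = n ^ β * (n ^ (α + 1) * √t ^ n) := by
          rw [rpow_add_one hn0.ne', rpow_add_one hn0.ne']; ring
      _ ≤ n ^ β * (E * u ^ (α + 1)) :=
          mul_le_mul_of_nonneg_left (rpow_mul_sqrt_pow_le (by linarith) ht0 ht1 n) (by positivity)
      _ = _ := by ring
  calc weightedPowerSum α β n t
      ≤ Mβ * n ^ β * ∑ j ∈ Icc 1 n, (j : ℝ) ^ α * t ^ j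
        + Mα * n ^ α * √t ^ n * ∑ j ∈ Icc 1 n, (j : ℝ) ^ β := by
        rw [← sum_Icc_reflect (· ^ β) n, mul_sum, mul_sum, ← sum_add_distrib]
        exact sum_le_sum fun j hj =>
          rpow_mul_rpow_mul_pow_le_add hn0 (mem_Icc.mp hj).1 (mem_Icc.mp hj).2 ht0 ht1.le
    _ ≤ Mβ * n ^ β * (K₁ * u ^ (α + 1)) + Mα * n ^ α * √t ^ n * (K₂ * n ^ (β + 1)) := by
        gcongr
        · exact hpoly n t ht0 ht1
        · exact hpart n
    _ ≤ Mβ * n ^ β * (K₁ * u ^ (α + 1)) + Mα * K₂ * (E * n ^ β * u ^ (α + 1)) := by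
        linarith [mul_le_mul_of_nonneg_left htail (by positivity : 0 ≤ Mα * K₂)]
    _ = (Mβ * K₁ + Mα * K₂ * E) * n ^ β * u ^ (α + 1) := by ring

lemma le_rpow_mul_rpow_mul_pow {α β a C t : ℝ} {n j : ℕ} (ha : 0 < a) (hC : 0 < C)
    (htC : 1 / C ≤ t) (ht1 : t < 1) (hj1 : (1 : ℝ) ≤ j) (hjn : (j : ℝ) < n / 2 + 1)
    (hauj : a * (1 - t)⁻¹ ≤ j) (hj3u : (j : ℝ) ≤ 3 * (1 - t)⁻¹) :
    min ((1 / 2 : ℝ) ^ β) (1 ^ β) * n ^ β * (min (a ^ α) (3 ^ α) * (1 - t)⁻¹ ^ α) * exp (-(3 * C))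
      ≤ ((n : ℝ) + 1 - j) ^ β * (j : ℝ) ^ α * t ^ j := by
  have hn0 : (0 : ℝ) < n := by linarith
  have ht0 : 0 < t := (one_div_pos.mpr hC).trans_le htC
  have hβ := min_mul_rpow_le_rpow β one_half_pos hn0 (x := n + 1 - j) (b := 1)
    (by linarith) (by linarith)
  have hα := min_mul_rpow_le_rpow α ha (by simpa using ht1) (x := j) (b := 3) hauj hj3u
  have ht : exp (-(3 * C)) ≤ t ^ j := by
    refine le_trans (exp_le_exp.mpr ?_) (exp_mul_one_sub_inv_le_pow ht0 j)
    have : (j : ℝ) * (1 - t) ≤ 3 := by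
      rwa [← le_div_iff₀ (by linarith), div_eq_mul_inv]
    have : t⁻¹ ≤ C := by rwa [inv_le_comm₀ ht0 hC, ← one_div]
    rw [show (j : ℝ) * (1 - t⁻¹) = -((j * (1 - t)) * t⁻¹) by field_simp; ring]
    nlinarith [inv_pos.mpr ht0]
  have hbase : 0 ≤ ((n : ℝ) + 1 - j) ^ β := rpow_nonneg (by linarith) β
  exact mul_le_mul (mul_le_mul hβ hα (by positivity) hbase) ht (by positivity) (by positivity)

lemma le_weightedPowerSum (α β : ℝ) {c C : ℝ} (hc : 0 < c) (hC : 0 < C) :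
    ∃ K, 0 < K ∧ ∀ n : ℕ, 0 < n → ∀ t, 1 / C ≤ t → t ≤ 1 - c / n →
      K * (n : ℝ) ^ β * (1 - t)⁻¹ ^ (α + 1) ≤ weightedPowerSum α β n t := by
  set a := min 1 (c / 4)
  have ha : 0 < a := lt_min one_pos (by positivity)
  refine ⟨a * min (a ^ α) (3 ^ α) * min ((1 / 2 : ℝ) ^ β) (1 ^ β) * exp (-(3 * C)),
    by positivity, fun n hn t htC htn => ?_⟩
  have hn0 : (0 : ℝ) < n := by exact_mod_cast hn
  have ht0 : 0 < t := (one_div_pos.mpr hC).trans_le htC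
  have ht1 : t < 1 := by linarith [div_pos hc hn0]
  set u := (1 - t)⁻¹
  have hu : 1 ≤ u := one_le_inv₀ (by linarith) |>.mpr (by linarith)
  have hcu : c * u ≤ n := by
    have : c / n ≤ 1 - t := by linarith
    rw [div_le_iff₀ hn0] at this
    rw [← div_eq_mul_inv, div_le_iff₀ (by linarith)]
    linarith
  set A := ⌈a * u⌉₊
  have hA1 : 1 ≤ A := Nat.one_le_ceil_iff.mpr (by positivity)
  have hAlo : a * u ≤ A := Nat.le_ceil _
  have hAhi : (A : ℝ) < a * u + 1 := Nat.ceil_lt_add_one (by positivity)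
  have hblock : ∀ j ∈ Ico A (2 * A),
      (1 : ℝ) ≤ j ∧ (j : ℝ) < n / 2 + 1 ∧ a * u ≤ j ∧ (j : ℝ) ≤ 3 * u := by
    intro j hj
    obtain ⟨hAj, hj2A⟩ := mem_Ico.mp hj
    have hAj' : (A : ℝ) ≤ j := by exact_mod_cast hAj
    have hj2A' : (j : ℝ) + 1 ≤ 2 * A := by exact_mod_cast hj2A
    refine ⟨by exact_mod_cast hA1.trans hAj, ?_, hAlo.trans hAj', ?_⟩
    · nlinarith [min_le_right 1 (c / 4)]
    · nlinarith [min_le_left 1 (c / 4)]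
  have hsub : Ico A (2 * A) ⊆ Icc 1 n := fun j hj => by
    obtain ⟨hj1, hjn, -⟩ := hblock j hj
    refine mem_Icc.mpr ⟨by exact_mod_cast hj1, ?_⟩
    exact Nat.lt_succ_iff.mp (by exact_mod_cast (show (j : ℝ) < n + 1 by linarith))
  set P := min ((1 / 2 : ℝ) ^ β) (1 ^ β) * n ^ β * (min (a ^ α) (3 ^ α) * u ^ α) * exp (-(3 * C))
  have hterm : ∀ j ∈ Ico A (2 * A), P ≤ ((n : ℝ) + 1 - j) ^ β * (j : ℝ) ^ α * t ^ j := fun j hj =>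
    have ⟨hj1, hjn, hauj, hj3u⟩ := hblock j hj
    le_rpow_mul_rpow_mul_pow ha hC htC ht1 hj1 hjn hauj hj3u
  calc _ = a * u * P := by rw [rpow_add_one (by positivity)]; ring
    _ ≤ (Ico A (2 * A)).card * P := by
        gcongr
        simpa [two_mul] using hAlo
    _ ≤ ∑ j ∈ Ico A (2 * A), ((n : ℝ) + 1 - j) ^ β * (j : ℝ) ^ α * t ^ j := by
        simpa using card_nsmul_le_sum _ _ P hterm
    _ ≤ weightedPowerSum α β n t := by
        refine sum_le_sum_of_subset_of_nonneg hsub fun j hj _ => ?_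
        have : (j : ℝ) ≤ n := by exact_mod_cast (mem_Icc.mp hj).2
        exact mul_nonneg (mul_nonneg (rpow_nonneg (by linarith) β) (by positivity)) (by positivity)

/-- For any real numbers `α > -1`, `β > -1`, any `c > 0`, and `C > 1`, there exist constants
depending only on `α, β, c, C` such that for every integer `n ≥ 1` and every real `t` with
`1/C ≤ t ≤ 1 - c/n`, the sum `∑_{j=1}^{n} (n+1-j)^β j^α t^j` is bounded above and below by
constant multiples of `n^β (1-t)^{-(α+1)}`. -/
theorem stmt_0 (α β c C : ℝ) (hα : -1 < α) (hβ : -1 < β) (hc : 0 < c) (hC : 1 < C) :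
    ∃ c₁ c₂ : ℝ, 0 < c₁ ∧ 0 < c₂ ∧ ∀ n : ℕ, 1 ≤ n → ∀ t : ℝ, 1 / C ≤ t → t ≤ 1 - c / n →
      c₁ * (n : ℝ) ^ β * (1 - t) ^ (-(α + 1)) ≤
          ∑ j ∈ Finset.Icc 1 n, ((n : ℝ) + 1 - (j : ℝ)) ^ β * (j : ℝ) ^ α * t ^ j ∧
      ∑ j ∈ Finset.Icc 1 n, ((n : ℝ) + 1 - (j : ℝ)) ^ β * (j : ℝ) ^ α * t ^ j ≤
          c₂ * (n : ℝ) ^ β * (1 - t) ^ (-(α + 1)) := by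
  have hC0 : 0 < C := by linarith
  obtain ⟨c₁, hc₁, hlow⟩ := le_weightedPowerSum α β hc hC0
  obtain ⟨c₂, hc₂, hup⟩ := weightedPowerSum_le hα hβ
  refine ⟨c₁, c₂, hc₁, hc₂, fun n hn t htC htn => ?_⟩
  have ht0 : 0 ≤ t := (one_div_pos.mpr hC0).le.trans htC
  have ht1 : t < 1 := by linarith [div_pos hc (by exact_mod_cast hn : (0 : ℝ) < n)]
  rw [rpow_neg (by linarith), ← inv_rpow (by linarith)]
  exact ⟨hlow n hn t htC htn, hup n hn t ht0 ht1⟩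
end

section
/- Let ε₀ > 0, C₀ > 0, and δ₀ ∈ (0,1). Then there exists p₀ ∈ (0,1), depending only on ε₀, C₀, δ₀, such that for every real-valued random variable ξ with mean zero, variance one, and E|ξ|^{2+ε₀} ≤ C₀, and every real number α, one has P(|ξ - α| ≤ δ₀) ≤ 1 - p₀. -/
/-!
Write `A = {|ξ - α| ≤ δ₀}` and `b = P(Aᶜ)`. Since `E(ξ - α)² = 1 + α²` while `(ξ - α)² ≤ δ₀²` on `A`
and `(ξ - α)² ≤ 2ξ² + 2α²` on `Aᶜ`, we get `1 - δ₀² + α²(1 - 2b) ≤ 2 E[ξ²; Aᶜ]`. The moment bound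
makes `ξ²` uniformly integrable: `E[ξ²; Aᶜ] ≤ M² b + C₀ / M^ε₀` for every `M > 0`. Choosing `M`
with `C₀ / M^ε₀ = (1 - δ₀²) / 8` forces `b ≥ min (1/4) ((1 - δ₀²) / (8 M²))`.
-/

open MeasureTheory

lemma sq_le_sq_add_abs_rpow_div {ε M : ℝ} (hε : 0 ≤ ε) (hM : 0 < M) (x : ℝ) :
    x ^ 2 ≤ M ^ 2 + |x| ^ (2 + ε) / M ^ ε := by
  rcases le_or_gt |x| M with hxM | hMx
  · have hx : x ^ 2 ≤ M ^ 2 := by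
      simpa only [sq_abs] using pow_le_pow_left₀ (abs_nonneg x) hxM 2
    have : 0 ≤ |x| ^ (2 + ε) / M ^ ε := by positivity
    linarith
  · have hx : 0 < |x| := hM.trans hMx
    have hsplit : |x| ^ (2 + ε) = x ^ 2 * |x| ^ ε := by
      rw [Real.rpow_add hx, Real.rpow_two, sq_abs]
    have hMε : M ^ ε ≤ |x| ^ ε := Real.rpow_le_rpow hM.le hMx.le hε
    have : x ^ 2 ≤ |x| ^ (2 + ε) / M ^ ε := by
      rw [le_div_iff₀ (Real.rpow_pos_of_pos hM ε), hsplit]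
      exact mul_le_mul_of_nonneg_left hMε (sq_nonneg x)
    nlinarith [sq_nonneg M]

section Moments

variable {Ω : Type*} [MeasurableSpace Ω] {μ : Measure Ω} {ξ : Ω → ℝ}

lemma setIntegral_sq_le_of_integrable_abs_rpow [IsFiniteMeasure μ] {ε M : ℝ} (hε : 0 ≤ ε)
    (hM : 0 < M) (hmom : Integrable (fun ω ↦ |ξ ω| ^ (2 + ε)) μ) (s : Set Ω) :
    ∫ ω in s, ξ ω ^ 2 ∂μ ≤ M ^ 2 * μ.real s + (∫ ω, |ξ ω| ^ (2 + ε) ∂μ) / M ^ ε := by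
  have hbound : Integrable (fun ω ↦ M ^ 2 + |ξ ω| ^ (2 + ε) / M ^ ε) μ :=
    (integrable_const _).add (hmom.div_const _)
  calc ∫ ω in s, ξ ω ^ 2 ∂μ ≤ ∫ ω in s, (M ^ 2 + |ξ ω| ^ (2 + ε) / M ^ ε) ∂μ :=
        integral_mono_of_nonneg (.of_forall fun ω ↦ sq_nonneg (ξ ω)) hbound.integrableOn
          (.of_forall fun ω ↦ sq_le_sq_add_abs_rpow_div hε hM (ξ ω))
    _ = M ^ 2 * μ.real s + (∫ ω in s, |ξ ω| ^ (2 + ε) ∂μ) / M ^ ε := by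
        rw [integral_add (integrable_const _).integrableOn (hmom.div_const _).integrableOn,
          integral_div, setIntegral_const, smul_eq_mul, mul_comm]
    _ ≤ M ^ 2 * μ.real s + (∫ ω, |ξ ω| ^ (2 + ε) ∂μ) / M ^ ε := by
        gcongr M ^ 2 * μ.real s + ?_ / _
        exact setIntegral_le_integral hmom (.of_forall fun ω ↦ by positivity)

variable [IsProbabilityMeasure μ]

lemma integral_sub_const_sq (hξ : MemLp ξ 2 μ) (hmean : ∫ ω, ξ ω ∂μ = 0)
    (hvar : ∫ ω, ξ ω ^ 2 ∂μ = 1) (α : ℝ) : ∫ ω, (ξ ω - α) ^ 2 ∂μ = 1 + α ^ 2 := by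
  have hint : Integrable ξ μ := hξ.integrable one_le_two
  have hexpand : (fun ω ↦ (ξ ω - α) ^ 2) = fun ω ↦ (ξ ω ^ 2 - 2 * α * ξ ω) + α ^ 2 := by
    funext ω; ring
  have hlin : Integrable (fun ω ↦ ξ ω ^ 2 - 2 * α * ξ ω) μ :=
    hξ.integrable_sq.sub (hint.const_mul _)
  rw [hexpand, integral_add hlin (integrable_const _),
    integral_sub hξ.integrable_sq (hint.const_mul _), integral_const_mul, hvar, hmean,
    integral_const, probReal_univ, one_smul, mul_zero, sub_zero]

lemma one_add_sq_le_setIntegral_compl (hξm : Measurable ξ) (hξ : MemLp ξ 2 μ)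
    (hmean : ∫ ω, ξ ω ∂μ = 0) (hvar : ∫ ω, ξ ω ^ 2 ∂μ = 1) (α δ : ℝ) :
    1 + α ^ 2 ≤ δ ^ 2 + 2 * ∫ ω in {ω | |ξ ω - α| ≤ δ}ᶜ, ξ ω ^ 2 ∂μ
      + 2 * α ^ 2 * μ.real {ω | |ξ ω - α| ≤ δ}ᶜ := by
  set A := {ω | |ξ ω - α| ≤ δ}
  have hA : MeasurableSet A := measurableSet_le (hξm.sub measurable_const).abs measurable_const
  have hsq : Integrable (fun ω ↦ (ξ ω - α) ^ 2) μ := (hξ.sub (memLp_const α)).integrable_sq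
  have hin : ∫ ω in A, (ξ ω - α) ^ 2 ∂μ ≤ δ ^ 2 := by
    calc ∫ ω in A, (ξ ω - α) ^ 2 ∂μ ≤ ∫ ω in A, δ ^ 2 ∂μ :=
          setIntegral_mono_on hsq.integrableOn integrableOn_const hA fun ω hω ↦ by
            simpa only [sq_abs] using pow_le_pow_left₀ (abs_nonneg _) (show |ξ ω - α| ≤ δ from hω) 2
      _ = μ.real A * δ ^ 2 := setIntegral_const _
      _ ≤ 1 * δ ^ 2 := by gcongr; exact measureReal_le_one
      _ = δ ^ 2 := one_mul _
  have hout : ∫ ω in Aᶜ, (ξ ω - α) ^ 2 ∂μ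
      ≤ 2 * ∫ ω in Aᶜ, ξ ω ^ 2 ∂μ + 2 * α ^ 2 * μ.real Aᶜ := by
    calc ∫ ω in Aᶜ, (ξ ω - α) ^ 2 ∂μ ≤ ∫ ω in Aᶜ, (2 * ξ ω ^ 2 + 2 * α ^ 2) ∂μ :=
          setIntegral_mono hsq.integrableOn
            ((hξ.integrable_sq.const_mul 2).add (integrable_const _)).integrableOn
            fun ω ↦ by nlinarith [sq_nonneg (ξ ω + α)]
      _ = 2 * ∫ ω in Aᶜ, ξ ω ^ 2 ∂μ + 2 * α ^ 2 * μ.real Aᶜ := by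
        rw [integral_add (hξ.integrable_sq.const_mul 2).integrableOn integrableOn_const,
          integral_const_mul, setIntegral_const, smul_eq_mul, mul_comm (μ.real Aᶜ)]
  rw [← integral_sub_const_sq hξ hmean hvar α, ← integral_add_compl hA hsq]
  linarith

end Moments

/-- Uniform anti-concentration: for `ε₀, C₀ > 0` and `δ₀ ∈ (0,1)` there is `p₀ ∈ (0,1)`,
depending only on `ε₀, C₀, δ₀`, such that any real random variable `ξ` with mean zero, unit
variance and `E|ξ|^{2+ε₀} ≤ C₀` satisfies `P(|ξ - α| ≤ δ₀) ≤ 1 - p₀` for every `α ∈ ℝ`. -/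
theorem stmt_2 (ε₀ C₀ δ₀ : ℝ) (hε₀ : 0 < ε₀) (hC₀ : 0 < C₀) (hδ₀ : δ₀ ∈ Set.Ioo (0:ℝ) 1) :
    ∃ p₀ ∈ Set.Ioo (0:ℝ) 1,
      ∀ (Ω : Type) (_ : MeasurableSpace Ω) (μ : Measure Ω), IsProbabilityMeasure μ →
        ∀ ξ : Ω → ℝ, Measurable ξ →
        MemLp ξ (ENNReal.ofReal (2 + ε₀)) μ →
        (∫ ω, ξ ω ∂μ) = 0 →
        (∫ ω, (ξ ω) ^ 2 ∂μ) = 1 →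
        (∫ ω, |ξ ω| ^ (2 + ε₀) ∂μ) ≤ C₀ →
        ∀ α : ℝ, (μ {ω | |ξ ω - α| ≤ δ₀}).toReal ≤ 1 - p₀ := by
  obtain ⟨hδ0, hδ1⟩ := hδ₀
  have hgap : 0 < 1 - δ₀ ^ 2 := by nlinarith
  set M := (8 * C₀ / (1 - δ₀ ^ 2)) ^ ε₀⁻¹
  have hM : 0 < M := by positivity
  have hMε : M ^ ε₀ = 8 * C₀ / (1 - δ₀ ^ 2) := Real.rpow_inv_rpow (by positivity) hε₀.ne'
  set p₀ := min (1 / 4) ((1 - δ₀ ^ 2) / (8 * M ^ 2))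
  have hp₀ : 0 < p₀ := lt_min (by norm_num) (by positivity)
  refine ⟨p₀, ⟨hp₀, by linarith [min_le_left (1 / 4 : ℝ) ((1 - δ₀ ^ 2) / (8 * M ^ 2))]⟩, ?_⟩
  intro Ω _ μ _ ξ hξm hLp hmean hvar hmom α
  have hp : ENNReal.ofReal (2 + ε₀) ≠ 0 := by simp only [ne_eq, ENNReal.ofReal_eq_zero]; linarith
  have hmomInt : Integrable (fun ω ↦ |ξ ω| ^ (2 + ε₀)) μ := by
    simpa [ENNReal.toReal_ofReal (by linarith : 0 ≤ 2 + ε₀)] using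
      hLp.integrable_norm_rpow hp ENNReal.ofReal_ne_top
  have hL2 : MemLp ξ 2 μ := hLp.mono_exponent (by
    rw [← ENNReal.ofReal_ofNat]; exact ENNReal.ofReal_le_ofReal (by linarith))
  set A := {ω | |ξ ω - α| ≤ δ₀}
  have hA : MeasurableSet A := measurableSet_le (hξm.sub measurable_const).abs measurable_const
  have hkey := one_add_sq_le_setIntegral_compl hξm hL2 hmean hvar α δ₀
  have htail := setIntegral_sq_le_of_integrable_abs_rpow hε₀.le hM hmomInt Aᶜ
  have hCM : C₀ / M ^ ε₀ = (1 - δ₀ ^ 2) / 8 := by rw [hMε]; field_simp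
  have hmomM : (∫ ω, |ξ ω| ^ (2 + ε₀) ∂μ) / M ^ ε₀ ≤ C₀ / M ^ ε₀ := by gcongr
  rw [← Measure.real_def, ← sub_sub_cancel 1 (μ.real A), ← probReal_compl_eq_one_sub hA]
  suffices p₀ ≤ μ.real Aᶜ by linarith
  by_contra! hsmall
  have hquarter : μ.real Aᶜ < 1 / 4 := hsmall.trans_le (min_le_left _ _)
  have hM2 : M ^ 2 * μ.real Aᶜ < (1 - δ₀ ^ 2) / 8 := by
    have := hsmall.trans_le (min_le_right _ _)
    rw [lt_div_iff₀ (by positivity)] at this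
    linarith
  nlinarith [mul_le_mul_of_nonneg_left hquarter.le (sq_nonneg α)]
end

section
/- Let f : D → ℂ be holomorphic on a neighborhood of the closed disk of radius R centered at z₀, with f(z₀) ≠ 0. Then for any r < R, the number of zeros of f in the closed disk of radius r centered at z₀ (counted with multiplicity) is at most (log(M/|f(z₀)|))/(log(R/r)), where M = sup_{|z−z₀|=R} |f(z)|. -/
open Metric ComplexConjugate

/-!
Multiplying `g` by `R⁻¹ (R² - conj (a - z₀) (z - z₀))` instead of `z - a` for every zero `a`
does not change the modulus on the circle `‖z - z₀‖ = R`, where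
`R² - conj (a - z₀) (z - z₀) = (z - z₀) conj (z - a)`, but replaces the factor `z₀ - a` of size
at most `r` at the centre by `R`. The maximum modulus principle for the new function gives
`‖g z₀‖ R ^ n ≤ M`, while `‖f z₀‖ ≤ ‖g z₀‖ r ^ n`; hence `‖f z₀‖ (R / r) ^ n ≤ M`.
-/

theorem Differentiable.multiset_prod_map {ι 𝕜 E 𝔸 : Type*} [NontriviallyNormedField 𝕜]
    [NormedAddCommGroup E] [NormedSpace 𝕜 E] [NormedCommRing 𝔸] [NormedAlgebra 𝕜 𝔸]
    {s : Multiset ι} {F : ι → E → 𝔸} (h : ∀ i ∈ s, Differentiable 𝕜 (F i)) :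
    Differentiable 𝕜 (fun x => (s.map (F · x)).prod) := by
  induction s using Multiset.induction with
  | empty => simp [differentiable_const]
  | cons i s ih =>
    simp only [Multiset.map_cons, Multiset.prod_cons]
    exact (h i (Multiset.mem_cons_self i s)).mul
      (ih fun j hj => h j (Multiset.mem_cons_of_mem hj))

section NormMulClass

variable {ι 𝔸 : Type*} [SeminormedCommRing 𝔸] [NormOneClass 𝔸] [NormMulClass 𝔸]

theorem norm_multiset_prod_map (s : Multiset ι) (F : ι → 𝔸) :
    ‖(s.map F).prod‖ = (s.map (‖F ·‖)).prod :=
  (s.prod_hom' (normHom : 𝔸 →*₀ ℝ) F).symm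

theorem norm_multiset_prod_map_le_pow_card {s : Multiset ι} {F : ι → 𝔸} {r : ℝ}
    (h : ∀ i ∈ s, ‖F i‖ ≤ r) : ‖(s.map F).prod‖ ≤ r ^ Multiset.card s :=
  calc ‖(s.map F).prod‖ = ((s.map F).map (normHom : 𝔸 →*₀ ℝ)).prod :=
        ((s.map F).prod_hom (normHom : 𝔸 →*₀ ℝ)).symm
    _ ≤ r ^ Multiset.card (s.map F) := Multiset.prod_map_le_pow_card (by simp) (by simpa using h)
    _ = r ^ Multiset.card s := by rw [Multiset.card_map]

end NormMulClass

theorem natCast_le_log_div_log_of_mul_pow_le {a b M : ℝ} {n : ℕ} (ha : 0 < a) (hb : 1 < b)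
    (h : a * b ^ n ≤ M) : (n : ℝ) ≤ Real.log (M / a) / Real.log b := by
  rw [le_div_iff₀ (Real.log_pos hb), ← Real.log_pow]
  exact Real.log_le_log (by positivity) ((le_div_iff₀' ha).2 h)

namespace Complex

/-- Vanishes at the reflection of `a` in the circle `sphere z₀ R`;
`(z - a) / reflectionFactor z₀ R a z` is the Blaschke factor of the disk with zero `a`. -/
noncomputable def reflectionFactor (z₀ : ℂ) (R : ℝ) (a z : ℂ) : ℂ :=
  (R ^ 2 - conj (a - z₀) * (z - z₀)) / R

variable {z₀ : ℂ} {R : ℝ}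

theorem differentiable_reflectionFactor (a : ℂ) : Differentiable ℂ (reflectionFactor z₀ R a) := by
  unfold reflectionFactor
  fun_prop

theorem reflectionFactor_self (hR : R ≠ 0) (a : ℂ) : reflectionFactor z₀ R a z₀ = R := by
  rw [reflectionFactor, sub_self, mul_zero, sub_zero, sq,
    mul_div_cancel_right₀ _ (ofReal_ne_zero.2 hR)]

theorem norm_reflectionFactor_of_mem_sphere (hR : 0 < R) (a : ℂ) {z : ℂ} (hz : z ∈ sphere z₀ R) :
    ‖reflectionFactor z₀ R a z‖ = ‖z - a‖ := by
  rw [mem_sphere_iff_norm] at hz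
  have hsq : (R : ℂ) ^ 2 = (z - z₀) * conj (z - z₀) := by
    rw [mul_conj', hz]
  have : (R : ℂ) ^ 2 - conj (a - z₀) * (z - z₀) = (z - z₀) * conj (z - a) := by
    rw [hsq, map_sub, map_sub, map_sub]
    ring
  rw [reflectionFactor, this, norm_div, norm_mul, norm_conj, hz, norm_real,
    Real.norm_of_nonneg hR.le, mul_div_cancel_left₀ _ hR.ne']

theorem norm_mul_pow_le_of_forall_mem_sphere {g : ℂ → ℂ} {M : ℝ} (hR : 0 < R)
    (hg : DifferentiableOn ℂ g (closedBall z₀ R)) (s : Multiset ℂ)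
    (hM : ∀ z ∈ sphere z₀ R, ‖g z * (s.map (z - ·)).prod‖ ≤ M) :
    ‖g z₀‖ * R ^ Multiset.card s ≤ M := by
  set h : ℂ → ℂ := fun z => g z * (s.map (reflectionFactor z₀ R · z)).prod
  have h_diff : DiffContOnCl ℂ h (ball z₀ R) := by
    refine DifferentiableOn.diffContOnCl ?_
    rw [closure_ball z₀ hR.ne']
    exact hg.mul (Differentiable.multiset_prod_map fun a _ =>
      differentiable_reflectionFactor a).differentiableOn
  have h_sphere : ∀ z ∈ sphere z₀ R, ‖h z‖ ≤ M := fun z hz => by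
    simpa only [h, norm_mul, norm_multiset_prod_map, norm_reflectionFactor_of_mem_sphere hR _ hz]
      using hM z hz
  have h_center : ‖h z₀‖ = ‖g z₀‖ * R ^ Multiset.card s := by
    simp [h, reflectionFactor_self hR.ne', abs_of_pos hR]
  rw [← h_center]
  exact norm_le_of_forall_mem_frontier_norm_le isBounded_ball h_diff
    (by rwa [frontier_ball z₀ hR.ne']) (subset_closure (mem_ball_self hR))

end Complex

theorem stmt_6_general (f g : ℂ → ℂ) (z₀ : ℂ) (R r M : ℝ) (hr : 0 < r) (hrR : r < R)
    (U : Set ℂ) (hRU : closedBall z₀ R ⊆ U)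
    (hg : DifferentiableOn ℂ g U)
    (s : Multiset ℂ) (hs : ∀ a ∈ s, a ∈ closedBall z₀ r)
    (hfac : ∀ z ∈ U, f z = g z * (s.map (fun a => z - a)).prod)
    (h0 : f z₀ ≠ 0)
    (hM : ∀ z ∈ sphere z₀ R, ‖f z‖ ≤ M) :
    (Multiset.card s : ℝ) ≤ Real.log (M / ‖f z₀‖) / Real.log (R / r) := by
  have hR : 0 < R := hr.trans hrR
  set n := Multiset.card s
  have h_center : ‖f z₀‖ ≤ ‖g z₀‖ * r ^ n := by
    rw [hfac z₀ (hRU (mem_closedBall_self hR.le)), norm_mul]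
    gcongr
    exact norm_multiset_prod_map_le_pow_card fun a ha => by
      simpa [dist_eq_norm] using mem_closedBall'.1 (hs a ha)
  have h_circle : ‖g z₀‖ * R ^ n ≤ M :=
    Complex.norm_mul_pow_le_of_forall_mem_sphere hR (hg.mono hRU) s fun z hz => by
      rw [← hfac z (hRU (sphere_subset_closedBall hz))]
      exact hM z hz
  refine natCast_le_log_div_log_of_mul_pow_le (norm_pos_iff.2 h0) ((one_lt_div hr).2 hrR) ?_
  calc ‖f z₀‖ * (R / r) ^ n ≤ ‖g z₀‖ * r ^ n * (R / r) ^ n := by gcongr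
    _ = ‖g z₀‖ * R ^ n := by rw [div_pow]; field_simp
    _ ≤ M := h_circle

/-- Jensen-type zero count: if `f` is holomorphic on a neighborhood of `closedBall z₀ R`,
`f z₀ ≠ 0`, and `M` bounds `|f|` on the circle of radius `R`, then any multiset `s` of zeros of
`f` (with multiplicity, i.e. appearing in a factorization `f = g ∏ (z - a)`) contained in
`closedBall z₀ r` with `0 < r < R` satisfies `card s ≤ log(M/|f z₀|) / log(R/r)`. -/
theorem stmt_6 (f g : ℂ → ℂ) (z₀ : ℂ) (R r M : ℝ) (hr : 0 < r) (hrR : r < R)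
    (U : Set ℂ) (hU : IsOpen U) (hRU : closedBall z₀ R ⊆ U)
    (hf : DifferentiableOn ℂ f U) (hg : DifferentiableOn ℂ g U)
    (s : Multiset ℂ) (hs : ∀ a ∈ s, a ∈ closedBall z₀ r)
    (hfac : ∀ z ∈ U, f z = g z * (s.map (fun a => z - a)).prod)
    (h0 : f z₀ ≠ 0)
    (hM : ∀ z ∈ sphere z₀ R, ‖f z‖ ≤ M) :
    (Multiset.card s : ℝ) ≤ Real.log (M / ‖f z₀‖) / Real.log (R / r) :=
  stmt_6_general f g z₀ R r M hr hrR U hRU hg s hs hfac h0 hM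
end

section
/- Let ε ∈ (0,1] and C > 0. Suppose ξ and ξ̃ are complex random variables with matching moments up to second order, both having E|ξ|^{2+ε} ≤ C and E|ξ̃|^{2+ε} ≤ C, and let f : ℝ² → ℂ be a C³ function. Write f(x,y) for f evaluated at (Re w, Im w). Then |E f(Re ξ, Im ξ) − E f(Re ξ̃, Im ξ̃)| ≤ C' · M₃^ε · M₂^{1−ε}, where M_i denotes the sum of the supremum norms of all partial derivatives of f of order exactly i, and C' depends only on C and ε. -/
/-!
Taylor-expand `f` to second order at the origin. Since the moments of `ξ` and `ξ̃` agree up to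
order two, the Taylor polynomial has the same expectation under both laws and only the remainders
contribute. The remainder at `w` is bounded both by `2 M₂ ‖w‖²` and by `M₃ ‖w‖³`, hence by the
geometric interpolation `2 M₃^ε M₂^(1-ε) ‖w‖^(2+ε)`, whose expectation is controlled by the
`(2+ε)`-th moment bound.
-/

open MeasureTheory
open scoped ENNReal

theorem le_rpow_mul_rpow_of_le_of_le {a b c ε : ℝ} (ha : 0 ≤ a) (hab : a ≤ b) (hac : a ≤ c)
    (hε₀ : 0 ≤ ε) (hε₁ : ε ≤ 1) : a ≤ b ^ ε * c ^ (1 - ε) :=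
  calc a = a ^ ε * a ^ (1 - ε) := by rw [← Real.rpow_add' ha (by norm_num), add_sub_cancel,
        Real.rpow_one]
    _ ≤ b ^ ε * c ^ (1 - ε) :=
      mul_le_mul (Real.rpow_le_rpow ha hab hε₀) (Real.rpow_le_rpow ha hac (by linarith))
        (by positivity) (Real.rpow_nonneg (ha.trans hab) _)

theorem le_mul_rpow_of_le_mul_sq_of_le_mul_cube {a M₂ M₃ r ε : ℝ} (hM₂ : 0 ≤ M₂) (hM₃ : 0 ≤ M₃)
    (hr : 0 ≤ r) (ha : 0 ≤ a) (h₂ : a ≤ 2 * M₂ * r ^ 2) (h₃ : a ≤ M₃ * r ^ 3) (hε₀ : 0 ≤ ε) (hε₁ : ε ≤ 1) :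
    a ≤ 2 * (M₃ ^ ε * M₂ ^ (1 - ε)) * r ^ (2 + ε) := by
  have key := le_rpow_mul_rpow_of_le_of_le (a := a / 2) (b := M₃ * r ^ 3) (c := M₂ * r ^ 2)
    (by positivity) (by nlinarith [pow_nonneg hr 3]) (by linarith) hε₀ hε₁
  have hpow : (M₃ * r ^ 3) ^ ε * (M₂ * r ^ 2) ^ (1 - ε) = M₃ ^ ε * M₂ ^ (1 - ε) * r ^ (2 + ε) := by
    rw [Real.mul_rpow hM₃ (by positivity), Real.mul_rpow hM₂ (by positivity),
      ← Real.rpow_natCast, ← Real.rpow_natCast, ← Real.rpow_mul hr, ← Real.rpow_mul hr,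
      show (2 : ℝ) + ε = (3 : ℕ) * ε + (2 : ℕ) * (1 - ε) by push_cast; ring,
      Real.rpow_add' hr (by push_cast; linarith)]
    ring
  linarith

section Taylor

variable {E F G : Type*} [NormedAddCommGroup E] [NormedSpace ℝ E]
  [NormedAddCommGroup F] [NormedSpace ℝ F] [NormedAddCommGroup G] [NormedSpace ℝ G]

theorem norm_sub_le_mul_pow_succ_of_hasFDerivAt {φ : E → G} {φ' : E → E →L[ℝ] G} {c : ℝ}
    {k : ℕ} (hφ : ∀ x, HasFDerivAt φ (φ' x) x) (hc : 0 ≤ c) (hφ' : ∀ x, ‖φ' x‖ ≤ c * ‖x‖ ^ k)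
    (w : E) : ‖φ w - φ 0‖ ≤ c * ‖w‖ ^ (k + 1) := by
  have hball : ∀ x ∈ Metric.closedBall (0 : E) ‖w‖, ‖φ' x‖ ≤ c * ‖w‖ ^ k := fun x hx =>
    (hφ' x).trans (by gcongr; simpa using hx)
  have := (convex_closedBall (0 : E) ‖w‖).norm_image_sub_le_of_norm_hasFDerivWithin_le
    (x := 0) (y := w) (fun x _ => (hφ x).hasFDerivWithinAt) hball
    (Metric.mem_closedBall_self (norm_nonneg w)) (by simp)
  simpa [pow_succ, mul_assoc] using this

theorem norm_fderiv_fderiv_eq (f : E → F) (x : E) :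
    ‖fderiv ℝ (fderiv ℝ f) x‖ = ‖iteratedFDeriv ℝ 2 f x‖ := by
  rw [← norm_iteratedFDeriv_one, norm_iteratedFDeriv_fderiv]

theorem norm_fderiv_fderiv_sub_le (f : E → F) (x y : E) :
    ‖fderiv ℝ (fderiv ℝ f) x - fderiv ℝ (fderiv ℝ f) y‖ ≤
      ‖iteratedFDeriv ℝ 2 f x - iteratedFDeriv ℝ 2 f y‖ := by
  refine ContinuousLinearMap.opNorm_le_bound₂ _ (norm_nonneg _) fun u v => ?_
  have := (iteratedFDeriv ℝ 2 f x - iteratedFDeriv ℝ 2 f y).le_opNorm ![u, v]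
  rw [sub_apply, iteratedFDeriv_two_apply, iteratedFDeriv_two_apply,
    Fin.prod_univ_two] at this
  simpa [mul_assoc] using this

noncomputable def taylorPoly₂ (f : E → F) (w : E) : F :=
  f 0 + fderiv ℝ f 0 w + (2⁻¹ : ℝ) • fderiv ℝ (fderiv ℝ f) 0 w w

theorem continuous_taylorPoly₂ (f : E → F) : Continuous (taylorPoly₂ f) := by
  unfold taylorPoly₂
  fun_prop

theorem hasFDerivAt_sub_taylorPoly₂ {f : E → F} (hf : ContDiff ℝ 2 f) (x : E) :
    HasFDerivAt (f - taylorPoly₂ f)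
      (fderiv ℝ f x - fderiv ℝ f 0 - fderiv ℝ (fderiv ℝ f) 0 x) x := by
  set D2 := fderiv ℝ (fderiv ℝ f) 0
  have hdf : ∀ y, HasFDerivAt f (fderiv ℝ f y) y := fun y =>
    (hf.differentiable (by norm_num) y).hasFDerivAt
  have hD2 : HasFDerivAt (fderiv ℝ f) D2 0 :=
    ((hf.fderiv_right (m := 1) (by norm_num)).differentiable (by norm_num) 0).hasFDerivAt
  have hsymm : ∀ v w, D2 v w = D2 w v := second_derivative_symmetric hdf hD2
  have hquad : HasFDerivAt (fun y => (2⁻¹ : ℝ) • D2 y y) (D2 x) x := by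
    refine ((D2.hasFDerivAt.clm_apply (hasFDerivAt_id x)).const_smul (2⁻¹ : ℝ)).congr_fderiv ?_
    ext v
    simp only [smul_apply, add_apply, ContinuousLinearMap.comp_apply,
      ContinuousLinearMap.id_apply, ContinuousLinearMap.flip_apply, id, hsymm v x]
    module
  exact ((hdf x).sub (((hasFDerivAt_const (f 0) x).add (fderiv ℝ f 0).hasFDerivAt).add
    hquad)).congr_fderiv (by abel)

theorem taylorPoly₂_zero (f : E → F) : taylorPoly₂ f 0 = f 0 := by
  simp [taylorPoly₂]

variable {f : E → F} {M₂ M₃ : ℝ}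

theorem norm_sub_taylorPoly₂_le_two_mul (hf : ContDiff ℝ 2 f)
    (h2 : ∀ x, ‖iteratedFDeriv ℝ 2 f x‖ ≤ M₂) (w : E) :
    ‖(f - taylorPoly₂ f) w‖ ≤ 2 * M₂ * ‖w‖ ^ 2 := by
  have hM₂ : 0 ≤ M₂ := (norm_nonneg _).trans (h2 0)
  have hF1 : ∀ x, ‖fderiv ℝ f x - fderiv ℝ f 0‖ ≤ M₂ * ‖x‖ := fun x => by
    simpa using norm_sub_le_mul_pow_succ_of_hasFDerivAt (k := 0)
      (fun y => ((hf.fderiv_right (m := 1) le_rfl).differentiable (by norm_num) y).hasFDerivAt)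
      hM₂ (fun y => by simpa [norm_fderiv_fderiv_eq] using h2 y) x
  have hD2 : ∀ x, ‖fderiv ℝ (fderiv ℝ f) 0 x‖ ≤ M₂ * ‖x‖ := fun x =>
    ((fderiv ℝ (fderiv ℝ f) 0).le_opNorm x).trans
      (by gcongr; simpa [norm_fderiv_fderiv_eq] using h2 0)
  simpa [taylorPoly₂_zero] using norm_sub_le_mul_pow_succ_of_hasFDerivAt (k := 1)
    (hasFDerivAt_sub_taylorPoly₂ hf) (by positivity)
    (fun x => (norm_sub_le _ _).trans (by linarith [hF1 x, hD2 x])) w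

theorem norm_sub_taylorPoly₂_le_mul_pow_three (hf : ContDiff ℝ 3 f)
    (h3 : ∀ x, ‖iteratedFDeriv ℝ 3 f x‖ ≤ M₃) (w : E) :
    ‖(f - taylorPoly₂ f) w‖ ≤ M₃ * ‖w‖ ^ 3 := by
  have hM₃ : 0 ≤ M₃ := (norm_nonneg _).trans (h3 0)
  set D2 := fderiv ℝ (fderiv ℝ f) 0
  have hG2 : ∀ x, ‖iteratedFDeriv ℝ 2 f x - iteratedFDeriv ℝ 2 f 0‖ ≤ M₃ * ‖x‖ := fun x => by
    simpa using norm_sub_le_mul_pow_succ_of_hasFDerivAt (k := 0)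
      (fun y => (hf.differentiable_iteratedFDeriv (m := 2) (by norm_num) y).hasFDerivAt)
      hM₃ (fun y => by simpa [norm_fderiv_iteratedFDeriv] using h3 y) x
  have hF1 : ∀ x, ‖fderiv ℝ f x - fderiv ℝ f 0 - D2 x‖ ≤ M₃ * ‖x‖ ^ 2 := fun x => by
    have hφ : ∀ y, HasFDerivAt (fun y => fderiv ℝ f y - D2 y) (fderiv ℝ (fderiv ℝ f) y - D2) y :=
      fun y => (((hf.fderiv_right (m := 2) (by norm_num)).differentiable (by norm_num) y)
        |>.hasFDerivAt).sub D2.hasFDerivAt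
    simpa [sub_right_comm] using norm_sub_le_mul_pow_succ_of_hasFDerivAt (k := 1) hφ hM₃
      (fun y => by simpa using (norm_fderiv_fderiv_sub_le f y 0).trans (hG2 y)) x
  simpa [taylorPoly₂_zero] using norm_sub_le_mul_pow_succ_of_hasFDerivAt (k := 2)
    (hasFDerivAt_sub_taylorPoly₂ (hf.of_le (by norm_num))) hM₃ hF1 w

theorem norm_sub_taylorPoly₂_le_rpow (hf : ContDiff ℝ 3 f)
    (h2 : ∀ x, ‖iteratedFDeriv ℝ 2 f x‖ ≤ M₂) (h3 : ∀ x, ‖iteratedFDeriv ℝ 3 f x‖ ≤ M₃)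
    {ε : ℝ} (hε₀ : 0 ≤ ε) (hε₁ : ε ≤ 1) (w : E) :
    ‖(f - taylorPoly₂ f) w‖ ≤ 2 * (M₃ ^ ε * M₂ ^ (1 - ε)) * ‖w‖ ^ (2 + ε) :=
  le_mul_rpow_of_le_mul_sq_of_le_mul_cube ((norm_nonneg _).trans (h2 0))
    ((norm_nonneg _).trans (h3 0)) (norm_nonneg w) (norm_nonneg _)
    (norm_sub_taylorPoly₂_le_two_mul (hf.of_le (by norm_num)) h2 w)
    (norm_sub_taylorPoly₂_le_mul_pow_three hf h3 w) hε₀ hε₁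

end Taylor

section Moments

variable {F : Type*} [NormedAddCommGroup F] [NormedSpace ℝ F]

variable (F) in
def bivariatePolynomials (n : ℕ) :
    Submodule ℝ (ℝ × ℝ → F) :=
  Submodule.span ℝ {p | ∃ a b : ℕ, a + b ≤ n ∧ ∃ v : F, p = fun z => (z.1 ^ a * z.2 ^ b) • v}

theorem monomial_mem_bivariatePolynomials {n a b : ℕ} (hab : a + b ≤ n) (v : F) :
    (fun z : ℝ × ℝ => (z.1 ^ a * z.2 ^ b) • v) ∈ bivariatePolynomials F n :=
  Submodule.subset_span ⟨a, b, hab, v, rfl⟩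

theorem quadratic_mem_bivariatePolynomials (c : F) (L : ℝ × ℝ →L[ℝ] F)
    (B : ℝ × ℝ →L[ℝ] ℝ × ℝ →L[ℝ] F) :
    (fun z => c + L z + B z z) ∈ bivariatePolynomials F 2 := by
  have hz : ∀ z : ℝ × ℝ, z = z.1 • ((1 : ℝ), (0 : ℝ)) + z.2 • ((0 : ℝ), (1 : ℝ)) := fun z => by
    simp
  have hexp : (fun z : ℝ × ℝ => c + L z + B z z) =
      (fun z => (z.1 ^ 0 * z.2 ^ 0) • c) +
      (fun z => (z.1 ^ 1 * z.2 ^ 0) • L (1, 0)) + (fun z => (z.1 ^ 0 * z.2 ^ 1) • L (0, 1)) +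
      (fun z => (z.1 ^ 2 * z.2 ^ 0) • B (1, 0) (1, 0)) +
      (fun z => (z.1 ^ 1 * z.2 ^ 1) • (B (1, 0) (0, 1) + B (0, 1) (1, 0))) +
      (fun z => (z.1 ^ 0 * z.2 ^ 2) • B (0, 1) (0, 1)) := by
    ext1 z
    conv_lhs => rw [hz z]
    simp only [map_add, map_smul, add_apply, smul_apply, Pi.add_apply]
    module
  rw [hexp]
  refine Submodule.add_mem _ (Submodule.add_mem _ (Submodule.add_mem _ (Submodule.add_mem _
    (Submodule.add_mem _ ?_ ?_) ?_) ?_) ?_) ?_ <;>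
    exact monomial_mem_bivariatePolynomials (by norm_num) _

theorem taylorPoly₂_mem_bivariatePolynomials (f : ℝ × ℝ → F) :
    taylorPoly₂ f ∈ bivariatePolynomials F 2 :=
  quadratic_mem_bivariatePolynomials (f 0) (fderiv ℝ f 0) ((2⁻¹ : ℝ) • fderiv ℝ (fderiv ℝ f) 0)

variable {Ω : Type*} [MeasurableSpace Ω] {μ : Measure Ω} {n : ℕ} {Z Z' : Ω → ℝ × ℝ}

theorem integrable_comp_of_mem_bivariatePolynomials
    (hZ : ∀ a b : ℕ, a + b ≤ n → Integrable (fun ω => (Z ω).1 ^ a * (Z ω).2 ^ b) μ)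
    {p : ℝ × ℝ → F} (hp : p ∈ bivariatePolynomials F n) :
    Integrable (fun ω => p (Z ω)) μ := by
  induction hp using Submodule.span_induction with
  | mem p hp =>
    obtain ⟨a, b, hab, v, rfl⟩ := hp
    exact (hZ a b hab).smul_const v
  | zero => exact integrable_zero _ _ _
  | add p q _ _ hp hq => exact hp.add hq
  | smul c p _ hp => exact Integrable.smul c hp

theorem integral_comp_eq_of_moments_eq [CompleteSpace F]
    (hZ : ∀ a b : ℕ, a + b ≤ n → Integrable (fun ω => (Z ω).1 ^ a * (Z ω).2 ^ b) μ)
    (hZ' : ∀ a b : ℕ, a + b ≤ n → Integrable (fun ω => (Z' ω).1 ^ a * (Z' ω).2 ^ b) μ)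
    (hmom : ∀ a b : ℕ, a + b ≤ n →
      ∫ ω, (Z ω).1 ^ a * (Z ω).2 ^ b ∂μ = ∫ ω, (Z' ω).1 ^ a * (Z' ω).2 ^ b ∂μ)
    {p : ℝ × ℝ → F} (hp : p ∈ bivariatePolynomials F n) :
    ∫ ω, p (Z ω) ∂μ = ∫ ω, p (Z' ω) ∂μ := by
  induction hp using Submodule.span_induction with
  | mem p hp =>
    obtain ⟨a, b, hab, v, rfl⟩ := hp
    simp only [integral_smul_const, hmom a b hab]
  | zero => simp
  | add p q hpmem hqmem hp hq =>
    simp only [Pi.add_apply]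
    rw [integral_add (integrable_comp_of_mem_bivariatePolynomials hZ hpmem)
      (integrable_comp_of_mem_bivariatePolynomials hZ hqmem),
      integral_add (integrable_comp_of_mem_bivariatePolynomials hZ' hpmem)
      (integrable_comp_of_mem_bivariatePolynomials hZ' hqmem), hp, hq]
  | smul c p _ hp => simp only [Pi.smul_apply, integral_smul, hp]

theorem integral_sub_integral_eq_of_moments_eq [CompleteSpace F]
    (hZ : ∀ a b : ℕ, a + b ≤ n → Integrable (fun ω => (Z ω).1 ^ a * (Z ω).2 ^ b) μ)
    (hZ' : ∀ a b : ℕ, a + b ≤ n → Integrable (fun ω => (Z' ω).1 ^ a * (Z' ω).2 ^ b) μ)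
    (hmom : ∀ a b : ℕ, a + b ≤ n →
      ∫ ω, (Z ω).1 ^ a * (Z ω).2 ^ b ∂μ = ∫ ω, (Z' ω).1 ^ a * (Z' ω).2 ^ b ∂μ)
    {f p : ℝ × ℝ → F} (hp : p ∈ bivariatePolynomials F n)
    (hf : Integrable (fun ω => (f - p) (Z ω)) μ) (hf' : Integrable (fun ω => (f - p) (Z' ω)) μ) :
    ∫ ω, f (Z ω) ∂μ - ∫ ω, f (Z' ω) ∂μ =
      ∫ ω, (f - p) (Z ω) ∂μ - ∫ ω, (f - p) (Z' ω) ∂μ := by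
  have hsplit : ∀ W : Ω → ℝ × ℝ, Integrable (fun ω => (f - p) (W ω)) μ →
      (∀ a b : ℕ, a + b ≤ n → Integrable (fun ω => (W ω).1 ^ a * (W ω).2 ^ b) μ) →
      ∫ ω, f (W ω) ∂μ = ∫ ω, p (W ω) ∂μ + ∫ ω, (f - p) (W ω) ∂μ := fun W hfW hW => by
    rw [← integral_add (integrable_comp_of_mem_bivariatePolynomials hW hp) hfW]
    simp
  rw [hsplit Z hf hZ, hsplit Z' hf' hZ', integral_comp_eq_of_moments_eq hZ hZ' hmom hp]
  abel

end Moments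

section Complex

variable {Ω : Type*} [MeasurableSpace Ω] {μ : Measure Ω} {ξ : Ω → ℂ}

theorem norm_re_im_le (z : ℂ) : ‖((z.re, z.im) : ℝ × ℝ)‖ ≤ ‖z‖ :=
  max_le (Complex.abs_re_le_norm z) (Complex.abs_im_le_norm z)

theorem integrable_re_pow_mul_im_pow [IsFiniteMeasure μ] {q : ℝ≥0∞} (hξ : MemLp ξ q μ) {a b : ℕ}
    (hab : ((a + b : ℕ) : ℝ≥0∞) ≤ q) : Integrable (fun ω => (ξ ω).re ^ a * (ξ ω).im ^ b) μ := by
  rcases Nat.eq_zero_or_pos (a + b) with h0 | hpos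
  · obtain ⟨rfl, rfl⟩ : a = 0 ∧ b = 0 := by omega
    simp
  have hnorm : Integrable (fun ω => ‖ξ ω‖ ^ (a + b)) μ :=
    (hξ.mono_exponent hab).integrable_norm_pow hpos.ne'
  refine hnorm.mono ?_ (ae_of_all _ fun ω => ?_)
  · exact ((Complex.continuous_re.comp_aestronglyMeasurable hξ.1).pow a).mul
      ((Complex.continuous_im.comp_aestronglyMeasurable hξ.1).pow b)
  · rw [norm_mul, norm_pow, norm_pow, norm_pow, norm_norm, pow_add]
    exact mul_le_mul (pow_le_pow_left₀ (norm_nonneg _) (Complex.abs_re_le_norm _) a)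
      (pow_le_pow_left₀ (norm_nonneg _) (Complex.abs_im_le_norm _) b) (by positivity)
      (by positivity)

variable {F : Type*} [NormedAddCommGroup F] {g : ℝ × ℝ → F} {K p : ℝ}

theorem norm_comp_re_im_le (hK : 0 ≤ K) (hp : 0 ≤ p) (hg : ∀ w, ‖g w‖ ≤ K * ‖w‖ ^ p) (z : ℂ) :
    ‖g (z.re, z.im)‖ ≤ K * ‖z‖ ^ p :=
  (hg _).trans (by gcongr; exact norm_re_im_le z)

theorem integrable_comp_re_im_of_norm_le_rpow (hg_cont : Continuous g) (hK : 0 ≤ K) (hp : 0 ≤ p)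
    (hg : ∀ w, ‖g w‖ ≤ K * ‖w‖ ^ p) (hξm : AEStronglyMeasurable ξ μ)
    (hξ : Integrable (fun ω => ‖ξ ω‖ ^ p) μ) :
    Integrable (fun ω => g ((ξ ω).re, (ξ ω).im)) μ :=
  (hξ.const_mul K).mono
    (hg_cont.comp_aestronglyMeasurable ((Complex.continuous_re.comp_aestronglyMeasurable hξm).prodMk
      (Complex.continuous_im.comp_aestronglyMeasurable hξm)))
    (ae_of_all _ fun _ => (norm_comp_re_im_le hK hp hg _).trans (le_abs_self _))

variable [NormedSpace ℝ F]

theorem norm_integral_comp_re_im_le (hK : 0 ≤ K) (hp : 0 ≤ p) (hg : ∀ w, ‖g w‖ ≤ K * ‖w‖ ^ p)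
    (hξ : Integrable (fun ω => ‖ξ ω‖ ^ p) μ) :
    ‖∫ ω, g ((ξ ω).re, (ξ ω).im) ∂μ‖ ≤ K * ∫ ω, ‖ξ ω‖ ^ p ∂μ := by
  rw [← integral_const_mul]
  exact norm_integral_le_of_norm_le (hξ.const_mul K)
    (ae_of_all _ fun _ => norm_comp_re_im_le hK hp hg _)

theorem norm_integral_sub_integral_le_of_moments_eq [IsFiniteMeasure μ] [CompleteSpace F]
    {ξ' : Ω → ℂ} {f P : ℝ × ℝ → F} {n : ℕ} (hP : P ∈ bivariatePolynomials F n)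
    (hcont : Continuous (f - P)) (hK : 0 ≤ K) (hnp : (n : ℝ) ≤ p)
    (hR : ∀ w, ‖(f - P) w‖ ≤ K * ‖w‖ ^ p)
    (hξ : MemLp ξ (ENNReal.ofReal p) μ) (hξ' : MemLp ξ' (ENNReal.ofReal p) μ)
    (hmom : ∀ a b : ℕ, a + b ≤ n →
      ∫ ω, (ξ ω).re ^ a * (ξ ω).im ^ b ∂μ = ∫ ω, (ξ' ω).re ^ a * (ξ' ω).im ^ b ∂μ) :
    ‖∫ ω, f ((ξ ω).re, (ξ ω).im) ∂μ - ∫ ω, f ((ξ' ω).re, (ξ' ω).im) ∂μ‖ ≤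
      K * (∫ ω, ‖ξ ω‖ ^ p ∂μ + ∫ ω, ‖ξ' ω‖ ^ p ∂μ) := by
  have hp : 0 ≤ p := (Nat.cast_nonneg n).trans hnp
  have hnorm : ∀ ζ : Ω → ℂ, MemLp ζ (ENNReal.ofReal p) μ →
      Integrable (fun ω => ‖ζ ω‖ ^ p) μ := fun ζ hζ => by
    simpa [ENNReal.toReal_ofReal hp] using hζ.integrable_norm_rpow'
  have hmoments : ∀ ζ : Ω → ℂ, MemLp ζ (ENNReal.ofReal p) μ → ∀ a b : ℕ, a + b ≤ n →
      Integrable (fun ω => (ζ ω).re ^ a * (ζ ω).im ^ b) μ := fun ζ hζ a b hab =>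
    integrable_re_pow_mul_im_pow hζ (by
      rw [← ENNReal.ofReal_natCast]
      exact ENNReal.ofReal_le_ofReal ((Nat.cast_le.mpr hab).trans hnp))
  rw [integral_sub_integral_eq_of_moments_eq (hmoments ξ hξ) (hmoments ξ' hξ') hmom hP
    (integrable_comp_re_im_of_norm_le_rpow hcont hK hp hR hξ.1 (hnorm ξ hξ))
    (integrable_comp_re_im_of_norm_le_rpow hcont hK hp hR hξ'.1 (hnorm ξ' hξ')), mul_add]
  exact (norm_sub_le _ _).trans (add_le_add (norm_integral_comp_re_im_le hK hp hR (hnorm ξ hξ))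
    (norm_integral_comp_re_im_le hK hp hR (hnorm ξ' hξ')))

end Complex

/-- Single-swap Lindeberg estimate: if `ξ` and `ξ̃` have matching moments up to second order
and uniformly bounded `(2+ε)`-moments, and `f : ℝ² → ℂ` is `C³` with second and third
derivatives bounded by `M₂` and `M₃`, then
`|E f(Re ξ, Im ξ) − E f(Re ξ̃, Im ξ̃)| ≤ C' M₃^ε M₂^{1−ε}`. -/
theorem stmt_13 (ε C : ℝ) (hε : 0 < ε) (hε1 : ε ≤ 1) (hC : 0 < C) :
    ∃ C' : ℝ, 0 < C' ∧
      ∀ (Ω : Type) (_ : MeasurableSpace Ω) (μ : Measure Ω), IsProbabilityMeasure μ →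
        ∀ (ξ ξ' : Ω → ℂ) (f : ℝ × ℝ → ℂ) (M₂ M₃ : ℝ),
        Measurable ξ → Measurable ξ' →
        MemLp ξ (ENNReal.ofReal (2 + ε)) μ → MemLp ξ' (ENNReal.ofReal (2 + ε)) μ →
        (∫ ω, ‖ξ ω‖ ^ (2 + ε) ∂μ) ≤ C → (∫ ω, ‖ξ' ω‖ ^ (2 + ε) ∂μ) ≤ C →
        (∀ a b : ℕ, a + b ≤ 2 →
          (∫ ω, (ξ ω).re ^ a * (ξ ω).im ^ b ∂μ) =
            ∫ ω, (ξ' ω).re ^ a * (ξ' ω).im ^ b ∂μ) →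
        ContDiff ℝ 3 f → 0 ≤ M₂ → 0 ≤ M₃ →
        (∀ w, ‖iteratedFDeriv ℝ 2 f w‖ ≤ M₂) →
        (∀ w, ‖iteratedFDeriv ℝ 3 f w‖ ≤ M₃) →
        ‖(∫ ω, f ((ξ ω).re, (ξ ω).im) ∂μ) - ∫ ω, f ((ξ' ω).re, (ξ' ω).im) ∂μ‖ ≤
          C' * M₃ ^ ε * M₂ ^ (1 - ε) := by
  refine ⟨4 * C, by positivity, ?_⟩
  intro Ω _ μ _ ξ ξ' f M₂ M₃ _ _ hξ hξ' hCξ hCξ' hmom hf _ _ h2 h3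
  calc _ ≤ 2 * (M₃ ^ ε * M₂ ^ (1 - ε)) * (∫ ω, ‖ξ ω‖ ^ (2 + ε) ∂μ + ∫ ω, ‖ξ' ω‖ ^ (2 + ε) ∂μ) :=
        norm_integral_sub_integral_le_of_moments_eq (taylorPoly₂_mem_bivariatePolynomials f)
          (hf.continuous.sub (continuous_taylorPoly₂ f)) (by positivity) (by push_cast; linarith)
          (norm_sub_taylorPoly₂_le_rpow hf h2 h3 hε.le hε1) hξ hξ' hmom
    _ ≤ 2 * (M₃ ^ ε * M₂ ^ (1 - ε)) * (C + C) := by gcongr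
    _ = 4 * C * M₃ ^ ε * M₂ ^ (1 - ε) := by ring
end

section
/- Assume b_j, c_j are real with |b_j| ≤ M(1+j)^{ρ'} for some ρ' ∈ (−1, ρ − 1/2) and |c_j| ≥ m(1+j)^ρ for K ≤ j ≤ n − K, where ρ > −1/2 and m, M, K > 0. Then there exist constants C, c'' > 0 (depending on ρ, ρ', m, M, K) such that for all n large and all t ∈ [1 − 1/C, 1], with δ = 1 + 1/n − t: |∑_{j=0}^n b_j t^j| ≤ C δ^{−(ρ'+1)} and (∑_{j=0}^n c_j² t^{2j})^{1/2} ≥ c'' δ^{−(ρ+1/2)}, hence |m_n(t)| ≤ C' δ^{ε} (Var[r_n(t)])^{1/2} with ε = ρ − ρ' − 1/2 > 0, where m_n(t) = ∑ b_j t^j and Var[r_n(t)] = ∑ c_j² t^{2j}. -/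
open Finset

set_option maxHeartbeats 1000000


namespace Stmt18Aux

/-- geometric sum bound -/
lemma geom_le {r : ℝ} (h0 : 0 ≤ r) (h1 : r < 1) (n : ℕ) :
    ∑ j ∈ range n, r ^ j ≤ (1 - r)⁻¹ := by
  rw [geom_sum_eq h1.ne, div_le_iff_of_neg (by linarith)]
  have h : (1 - r)⁻¹ * (r - 1) = -1 := by
    field_simp
    rw [div_eq_iff (by linarith : (1:ℝ) - r ≠ 0)]
    ring
  nlinarith [pow_nonneg h0 n]

/-- lower bound for 1 - exp(-x) -/
lemma one_sub_exp_neg {x : ℝ} (h0 : 0 ≤ x) (h1 : x ≤ 1) :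
    x / 2 ≤ 1 - Real.exp (-x) := by
  have h2 : Real.exp (-x) ≤ (1 + x)⁻¹ := by
    rw [Real.exp_neg]
    apply inv_anti₀ (by linarith)
    linarith [Real.add_one_le_exp x]
  have h3 : (1 + x)⁻¹ ≤ 1 - x / 2 := by
    rw [inv_le_iff_one_le_mul₀ (by linarith)]
    nlinarith
  linarith

/-- polynomial dominated by exponential -/
lemma poly_le_exp (α : ℝ) (hα : 0 ≤ α) :
    ∃ C : ℝ, 0 < C ∧ ∀ x : ℝ, 0 < x → x ^ α ≤ C * Real.exp (x / 2) := by
  set m := ⌈α⌉₊ with hm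
  refine ⟨2 ^ m * m.factorial + 1, by positivity, fun x hx => ?_⟩
  have hexp1 : (1 : ℝ) ≤ Real.exp (x / 2) := by
    rw [← Real.exp_zero]
    exact Real.exp_le_exp.2 (by linarith)
  rcases le_or_gt x 1 with h | h
  · calc x ^ α ≤ 1 := Real.rpow_le_one hx.le h hα
    _ ≤ (2 ^ m * m.factorial + 1) * Real.exp (x / 2) := by
        have h2pow : (0:ℝ) < 2 ^ m := by positivity
        have hf : (0:ℝ) < m.factorial := Nat.cast_pos.2 m.factorial_pos
        have h4 : (1:ℝ) * 1 ≤ (2 ^ m * m.factorial + 1) * Real.exp (x / 2) :=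
          mul_le_mul (by nlinarith [mul_pos h2pow hf]) hexp1 zero_le_one (by positivity)
        linarith
  · have h1 : x ^ α ≤ x ^ (m : ℝ) :=
      Real.rpow_le_rpow_of_exponent_le h.le (Nat.le_ceil α)
    have h2 : (x / 2) ^ m / m.factorial ≤ Real.exp (x / 2) := by
      calc (x / 2) ^ m / m.factorial
          ≤ ∑ i ∈ range (m + 1), (x / 2) ^ i / i.factorial := by
            refine Finset.single_le_sum (f := fun i => (x/2)^i / (i.factorial : ℝ))
              (fun i _ => by positivity) ?_
            exact self_mem_range_succ m
        _ ≤ Real.exp (x / 2) := Real.sum_le_exp_of_nonneg (by positivity) _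
    have h3 : x ^ m = 2 ^ m * (x / 2) ^ m := by
      rw [div_pow, ← mul_div_assoc, mul_comm, mul_div_assoc, div_self (by positivity), mul_one]
    have hf : (0:ℝ) < m.factorial := Nat.cast_pos.2 m.factorial_pos
    calc x ^ α ≤ x ^ (m : ℝ) := h1
      _ = x ^ m := Real.rpow_natCast x m
      _ = 2 ^ m * (x / 2) ^ m := h3
      _ ≤ 2 ^ m * (m.factorial * Real.exp (x / 2)) := by
          have := (div_le_iff₀ hf).1 h2
          have h2pow : (0:ℝ) < 2 ^ m := by positivity
          nlinarith
      _ ≤ (2 ^ m * m.factorial + 1) * Real.exp (x / 2) := by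
          have h2pow : (0:ℝ) < 2 ^ m := by positivity
          nlinarith



lemma head_sum {α : ℝ} (hα1 : -1 < α) (hα2 : α < 0) (J : ℕ) :
    ∑ j ∈ range (J + 1), (1 + (j : ℝ)) ^ α ≤
      (2 : ℝ) ^ (-α) / (α + 1) * ((J : ℝ) + 2) ^ (α + 1) := by
  have hβ : 0 < α + 1 := by linarith
  set f : ℕ → ℝ := fun k => ((k : ℝ) + 1) ^ (α + 1) with hf
  have c0 : (0 : ℝ) ≤ 2 ^ (-α) / (α + 1) := by positivity
  have key : ∀ j : ℕ, (1 + (j : ℝ)) ^ α ≤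
      (2 : ℝ) ^ (-α) / (α + 1) * (f (j + 1) - f j) := by
    intro j
    set x : ℝ := (j : ℝ) + 1 with hx
    set y : ℝ := (j : ℝ) + 2 with hy
    have hfj1 : f (j + 1) = y ^ (α + 1) := by
      simp only [hf, hy]
      push_cast
      ring_nf
    have hfj : f j = x ^ (α + 1) := by simp only [hf, hx]
    rw [hfj1, hfj]
    have hxpos : 0 < x := by positivity
    have hypos : 0 < y := by positivity
    have hs : -1 ≤ -(1 / y) := by
      rw [neg_le_neg_iff, div_le_one hypos, hy]
      have : (0:ℝ) ≤ (j : ℝ) := Nat.cast_nonneg j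
      linarith
    have hbern := rpow_one_add_le_one_add_mul_self hs hβ.le (by linarith : α + 1 ≤ 1)
    have h1y : 1 + -(1 / y) = x / y := by
      field_simp [hx, hy]
      ring
    rw [h1y] at hbern
    have hxy : (x / y) ^ (α + 1) * y ^ (α + 1) = x ^ (α + 1) := by
      rw [Real.div_rpow hxpos.le hypos.le, div_mul_cancel₀]
      positivity
    have hmul : x ^ (α + 1) ≤ (1 + (α + 1) * -(1 / y)) * y ^ (α + 1) := by
      rw [← hxy]
      exact mul_le_mul_of_nonneg_right hbern (by positivity)
    have hyα : y ^ (α + 1) * y⁻¹ = y ^ α := by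
      rw [← Real.rpow_neg_one y, ← Real.rpow_add hypos]
      norm_num
    have hexp : (1 + (α + 1) * -(1 / y)) * y ^ (α + 1) =
        y ^ (α + 1) - (α + 1) * (y ^ (α + 1) * y⁻¹) := by
      field_simp
      ring
    rw [hexp, hyα] at hmul
    have hkey : (α + 1) * y ^ α ≤ y ^ (α + 1) - x ^ (α + 1) := by linarith
    have hx2 : y ≤ 2 * x := by
      rw [hx, hy]
      have : (0:ℝ) ≤ (j : ℝ) := Nat.cast_nonneg j
      linarith
    have h2x : (2 * x) ^ α ≤ y ^ α :=
      Real.rpow_le_rpow_of_nonpos hypos hx2 hα2.le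
    have h2x' : (2 * x) ^ α = 2 ^ α * x ^ α := Real.mul_rpow (by norm_num) hxpos.le
    have hxα : x ^ α ≤ 2 ^ (-α) * y ^ α := by
      have h2pos : (0 : ℝ) < 2 ^ α := Real.rpow_pos_of_pos two_pos α
      have h2neg : (2 : ℝ) ^ (-α) = ((2 : ℝ) ^ α)⁻¹ := Real.rpow_neg (by norm_num) α
      rw [h2neg, ← div_eq_inv_mul, le_div_iff₀ h2pos]
      calc x ^ α * 2 ^ α = 2 ^ α * x ^ α := by ring
        _ = (2 * x) ^ α := h2x'.symm
        _ ≤ y ^ α := h2x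
    calc (1 + (j : ℝ)) ^ α = x ^ α := by rw [hx, add_comm]
      _ ≤ 2 ^ (-α) * y ^ α := hxα
      _ ≤ 2 ^ (-α) / (α + 1) * (y ^ (α + 1) - x ^ (α + 1)) := by
          rw [div_mul_eq_mul_div, le_div_iff₀ hβ]
          calc 2 ^ (-α) * y ^ α * (α + 1) = 2 ^ (-α) * ((α + 1) * y ^ α) := by ring
            _ ≤ 2 ^ (-α) * (y ^ (α + 1) - x ^ (α + 1)) :=
                mul_le_mul_of_nonneg_left hkey (by positivity)
  have tele : ∑ j ∈ range (J + 1), (f (j + 1) - f j) = f (J + 1) - f 0 :=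
    Finset.sum_range_sub f (J + 1)
  calc ∑ j ∈ range (J + 1), (1 + (j : ℝ)) ^ α
      ≤ ∑ j ∈ range (J + 1), (2 : ℝ) ^ (-α) / (α + 1) * (f (j + 1) - f j) :=
        Finset.sum_le_sum fun j _ => key j
    _ = (2 : ℝ) ^ (-α) / (α + 1) * (f (J + 1) - f 0) := by
        rw [← Finset.mul_sum, tele]
    _ ≤ (2 : ℝ) ^ (-α) / (α + 1) * ((J : ℝ) + 2) ^ (α + 1) := by
        apply mul_le_mul_of_nonneg_left _ c0
        have hf0 : f 0 = 1 := by simp [hf]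
        have hfJ : f (J + 1) = ((J : ℝ) + 2) ^ (α + 1) := by
          simp only [hf]
          push_cast
          ring_nf
        rw [hf0, hfJ]
        linarith



lemma upper_bound (α : ℝ) (hα : -1 < α) :
    ∃ Cu : ℝ, 0 < Cu ∧ ∀ n : ℕ, 1 ≤ n → ∀ t : ℝ, 0 ≤ t → t ≤ 1 →
      1 + 1 / (n : ℝ) - t ≤ 1 / 2 →
      ∑ j ∈ range (n + 1), (1 + (j : ℝ)) ^ α * t ^ j ≤
        Cu * (1 + 1 / (n : ℝ) - t) ^ (-(α + 1)) := by
  have main : ∀ (Cu : ℝ) , (∀ (n : ℕ), 1 ≤ n → ∀ (t : ℝ), 0 ≤ t → t ≤ 1 →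
      ∀ δ : ℝ, δ = 1 + 1 / (n : ℝ) - t → 0 < δ → δ ≤ 1 / 2 →
      (∀ j ≤ n, t ^ j ≤ Real.exp 1 * Real.exp (-δ * j)) →
      ∑ j ∈ range (n + 1), (1 + (j : ℝ)) ^ α * t ^ j ≤ Cu * δ ^ (-(α + 1))) →
      ∀ (n : ℕ), 1 ≤ n → ∀ (t : ℝ), 0 ≤ t → t ≤ 1 → 1 + 1 / (n : ℝ) - t ≤ 1 / 2 →
      ∑ j ∈ range (n + 1), (1 + (j : ℝ)) ^ α * t ^ j ≤
        Cu * (1 + 1 / (n : ℝ) - t) ^ (-(α + 1)) := by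
    intro Cu H n hn t ht0 ht1 hhalf
    have hnpos : (0 : ℝ) < (n : ℝ) := by
      exact_mod_cast Nat.pos_of_ne_zero (by omega)
    have hδpos : 0 < 1 + 1 / (n : ℝ) - t := by
      have : 0 < 1 / (n : ℝ) := by positivity
      linarith
    refine H n hn t ht0 ht1 _ rfl hδpos hhalf ?_
    intro j hj
    have h1 : t ≤ Real.exp (t - 1) := by linarith [Real.add_one_le_exp (t - 1)]
    have h2 : t ^ j ≤ Real.exp (t - 1) ^ j := pow_le_pow_left₀ ht0 h1 j
    have h3 : Real.exp (t - 1) ^ j = Real.exp ((t - 1) * j) := by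
      rw [mul_comm, Real.exp_nat_mul]
    have h4 : (t - 1) * j ≤ 1 + (-(1 + 1 / (n : ℝ) - t) * j) := by
      have hjn : (j : ℝ) / (n : ℝ) ≤ 1 := by
        rw [div_le_one hnpos]
        exact_mod_cast hj
      have : (t - 1) * j = (j : ℝ) / n + (-(1 + 1 / (n : ℝ) - t) * j) := by
        field_simp
        ring
      linarith
    calc t ^ j ≤ Real.exp ((t - 1) * j) := h2.trans_eq h3
      _ ≤ Real.exp (1 + (-(1 + 1 / (n : ℝ) - t) * j)) := Real.exp_le_exp.2 h4
      _ = Real.exp 1 * Real.exp (-(1 + 1 / (n : ℝ) - t) * j) := Real.exp_add _ _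
  rcases le_or_gt 0 α with hα0 | hα0
  · -- case α ≥ 0
    obtain ⟨C3, hC3, hC3'⟩ := poly_le_exp α hα0
    refine ⟨C3 * Real.exp 1 * Real.exp 1 * 4, by positivity, main _ ?_⟩
    intro n hn t ht0 ht1 δ hδ hδpos hδhalf hte
    have hsplit : δ ^ (-(α + 1)) = δ ^ (-α) * δ⁻¹ := by
      rw [show -(α + 1) = -α + -1 by ring, Real.rpow_add hδpos, Real.rpow_neg_one]
    have term : ∀ j ∈ range (n + 1), (1 + (j : ℝ)) ^ α * t ^ j ≤
        (C3 * Real.exp 1 * Real.exp 1 * δ ^ (-α)) * Real.exp (-(δ / 2)) ^ j := by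
      intro j hj
      rw [mem_range] at hj
      have hj' : j ≤ n := by omega
      have hjpos : (0 : ℝ) < 1 + (j : ℝ) := by positivity
      have e1 : (1 + (j : ℝ)) ^ α = δ ^ (-α) * (δ * (1 + (j : ℝ))) ^ α := by
        rw [Real.mul_rpow hδpos.le hjpos.le, Real.rpow_neg hδpos.le, ← mul_assoc,
          inv_mul_cancel₀ (by positivity : δ ^ α ≠ 0), one_mul]
      have e2 : (δ * (1 + (j : ℝ))) ^ α ≤ C3 * Real.exp (δ * (1 + (j : ℝ)) / 2) :=
        hC3' _ (by positivity)
      have e3 : t ^ j ≤ Real.exp 1 * Real.exp (-δ * j) := hte j hj'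
      have htpow : (0 : ℝ) ≤ t ^ j := by positivity
      have hδα : (0 : ℝ) ≤ δ ^ (-α) := (Real.rpow_pos_of_pos hδpos _).le
      calc (1 + (j : ℝ)) ^ α * t ^ j
          = δ ^ (-α) * ((δ * (1 + (j : ℝ))) ^ α * t ^ j) := by rw [e1]; ring
        _ ≤ δ ^ (-α) * ((C3 * Real.exp (δ * (1 + (j : ℝ)) / 2)) *
              (Real.exp 1 * Real.exp (-δ * j))) := by
            apply mul_le_mul_of_nonneg_left _ hδα
            exact mul_le_mul e2 e3 htpow (by positivity)
        _ = (C3 * Real.exp 1 * δ ^ (-α)) *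
              (Real.exp (δ * (1 + (j : ℝ)) / 2) * Real.exp (-δ * j)) := by ring
        _ = (C3 * Real.exp 1 * δ ^ (-α)) *
              (Real.exp (δ / 2) * Real.exp (-(δ / 2) * j)) := by
            rw [← Real.exp_add, ← Real.exp_add]
            congr 1
            ring
        _ ≤ (C3 * Real.exp 1 * Real.exp 1 * δ ^ (-α)) * Real.exp (-(δ / 2)) ^ j := by
            rw [← Real.exp_nat_mul, mul_comm (j : ℝ)]
            have : Real.exp (δ / 2) ≤ Real.exp 1 := Real.exp_le_exp.2 (by linarith)
            have hle : Real.exp (δ / 2) * Real.exp (-(δ / 2) * j) ≤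
                Real.exp 1 * Real.exp (-(δ / 2) * j) :=
              mul_le_mul_of_nonneg_right this (Real.exp_pos _).le
            calc C3 * Real.exp 1 * δ ^ (-α) * (Real.exp (δ / 2) * Real.exp (-(δ / 2) * j))
                ≤ C3 * Real.exp 1 * δ ^ (-α) * (Real.exp 1 * Real.exp (-(δ / 2) * j)) := by
                  apply mul_le_mul_of_nonneg_left hle
                  positivity
              _ = C3 * Real.exp 1 * Real.exp 1 * δ ^ (-α) * Real.exp (-(δ / 2) * j) := by ring
    have hr0 : (0 : ℝ) ≤ Real.exp (-(δ / 2)) := (Real.exp_pos _).le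
    have hr1 : Real.exp (-(δ / 2)) < 1 := Real.exp_lt_one_iff.2 (by linarith)
    have hgeom : ∑ j ∈ range (n + 1), Real.exp (-(δ / 2)) ^ j ≤ 4 * δ⁻¹ := by
      calc ∑ j ∈ range (n + 1), Real.exp (-(δ / 2)) ^ j ≤ (1 - Real.exp (-(δ / 2)))⁻¹ :=
          geom_le hr0 hr1 _
        _ ≤ 4 * δ⁻¹ := by
          have h1 := one_sub_exp_neg (x := δ / 2) (by linarith) (by linarith)
          have h2 : δ / 4 ≤ 1 - Real.exp (-(δ / 2)) := by
            have e : -(δ / 2) = -(δ / 2) := rfl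
            linarith [h1]
          calc (1 - Real.exp (-(δ / 2)))⁻¹ ≤ (δ / 4)⁻¹ := inv_anti₀ (by linarith) h2
            _ = 4 * δ⁻¹ := by rw [div_eq_mul_inv, mul_inv, inv_inv]; ring
    calc ∑ j ∈ range (n + 1), (1 + (j : ℝ)) ^ α * t ^ j
        ≤ ∑ j ∈ range (n + 1),
            (C3 * Real.exp 1 * Real.exp 1 * δ ^ (-α)) * Real.exp (-(δ / 2)) ^ j :=
          Finset.sum_le_sum term
      _ = (C3 * Real.exp 1 * Real.exp 1 * δ ^ (-α)) *
            ∑ j ∈ range (n + 1), Real.exp (-(δ / 2)) ^ j := by rw [Finset.mul_sum]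
      _ ≤ (C3 * Real.exp 1 * Real.exp 1 * δ ^ (-α)) * (4 * δ⁻¹) := by
          apply mul_le_mul_of_nonneg_left hgeom
          positivity
      _ = C3 * Real.exp 1 * Real.exp 1 * 4 * δ ^ (-(α + 1)) := by
          rw [hsplit]; ring
  · -- case α < 0
    refine ⟨(2 : ℝ) ^ (-α) * 4 ^ (α + 1) / (α + 1) + 2 * Real.exp 1, ?_, main _ ?_⟩
    · have hβ : 0 < α + 1 := by linarith
      positivity
    intro n hn t ht0 ht1 δ hδ hδpos hδhalf hte
    have hβ : 0 < α + 1 := by linarith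
    have hδinvpos : 0 < δ⁻¹ := by positivity
    have hinv2 : (2 : ℝ) ≤ δ⁻¹ := by
      rw [show (2 : ℝ) = (1 / 2)⁻¹ by norm_num]
      exact inv_anti₀ hδpos hδhalf
    set J := ⌈δ⁻¹⌉₊ with hJ
    have hJ1 : δ⁻¹ ≤ (J : ℝ) := Nat.le_ceil _
    have hJ2 : (J : ℝ) < δ⁻¹ + 1 := Nat.ceil_lt_add_one hδinvpos.le
    have hsplit : δ ^ (-(α + 1)) = δ ^ (-α) * δ⁻¹ := by
      rw [show -(α + 1) = -α + -1 by ring, Real.rpow_add hδpos, Real.rpow_neg_one]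
    rw [← Finset.sum_filter_add_sum_filter_not (range (n + 1)) (fun j => j ≤ J)]
    have part1 : ∑ j ∈ (range (n + 1)).filter (fun j => j ≤ J), (1 + (j : ℝ)) ^ α * t ^ j ≤
        (2 : ℝ) ^ (-α) * 4 ^ (α + 1) / (α + 1) * δ ^ (-(α + 1)) := by
      have s1 : ∑ j ∈ (range (n + 1)).filter (fun j => j ≤ J), (1 + (j : ℝ)) ^ α * t ^ j ≤
          ∑ j ∈ range (J + 1), (1 + (j : ℝ)) ^ α := by
        calc ∑ j ∈ (range (n + 1)).filter (fun j => j ≤ J), (1 + (j : ℝ)) ^ α * t ^ j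
            ≤ ∑ j ∈ (range (n + 1)).filter (fun j => j ≤ J), (1 + (j : ℝ)) ^ α := by
              apply Finset.sum_le_sum
              intro j _
              have h1 : (0:ℝ) ≤ (1 + (j : ℝ)) ^ α := by positivity
              have h2 : t ^ j ≤ 1 := pow_le_one₀ ht0 ht1
              nlinarith [pow_nonneg ht0 j]
          _ ≤ ∑ j ∈ range (J + 1), (1 + (j : ℝ)) ^ α := by
              apply Finset.sum_le_sum_of_subset_of_nonneg
              · intro j hj
                simp only [mem_filter, mem_range] at hj ⊢
                omega
              · intro j _ _
                positivity
      have s2 : ((J : ℝ) + 2) ^ (α + 1) ≤ (4 * δ⁻¹) ^ (α + 1) := by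
        apply Real.rpow_le_rpow (by positivity) _ hβ.le
        linarith
      have s3 : ((4 : ℝ) * δ⁻¹) ^ (α + 1) = 4 ^ (α + 1) * δ ^ (-(α + 1)) := by
        rw [Real.mul_rpow (by norm_num) hδinvpos.le, Real.inv_rpow hδpos.le,
          ← Real.rpow_neg hδpos.le]
      have c0 : (0 : ℝ) ≤ (2 : ℝ) ^ (-α) / (α + 1) := by positivity
      calc ∑ j ∈ (range (n + 1)).filter (fun j => j ≤ J), (1 + (j : ℝ)) ^ α * t ^ j
          ≤ ∑ j ∈ range (J + 1), (1 + (j : ℝ)) ^ α := s1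
        _ ≤ (2 : ℝ) ^ (-α) / (α + 1) * ((J : ℝ) + 2) ^ (α + 1) := head_sum hα hα0 J
        _ ≤ (2 : ℝ) ^ (-α) / (α + 1) * ((4 : ℝ) * δ⁻¹) ^ (α + 1) :=
            mul_le_mul_of_nonneg_left s2 c0
        _ = (2 : ℝ) ^ (-α) * 4 ^ (α + 1) / (α + 1) * δ ^ (-(α + 1)) := by
            rw [s3]; ring
    have part2 : ∑ j ∈ (range (n + 1)).filter (fun j => ¬ j ≤ J),
        (1 + (j : ℝ)) ^ α * t ^ j ≤ 2 * Real.exp 1 * δ ^ (-(α + 1)) := by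
      have hterm : ∀ j ∈ (range (n + 1)).filter (fun j => ¬ j ≤ J),
          (1 + (j : ℝ)) ^ α * t ^ j ≤ δ ^ (-α) * Real.exp 1 * Real.exp (-δ) ^ j := by
        intro j hj
        simp only [mem_filter, mem_range] at hj
        have hjJ : J < j := by omega
        have hjn : j ≤ n := by omega
        have h1 : δ⁻¹ ≤ 1 + (j : ℝ) := by
          have hJj : (J : ℝ) ≤ (j : ℝ) := by exact_mod_cast hjJ.le
          linarith
        have h2 : (1 + (j : ℝ)) ^ α ≤ (δ⁻¹) ^ α :=
          Real.rpow_le_rpow_of_nonpos hδinvpos h1 hα0.le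
        have h3 : (δ⁻¹) ^ α = δ ^ (-α) := by
          rw [Real.inv_rpow hδpos.le, ← Real.rpow_neg hδpos.le]
        rw [h3] at h2
        have h4 : t ^ j ≤ Real.exp 1 * Real.exp (-δ) ^ j := by
          have h5 := hte j hjn
          rwa [mul_comm (-δ) (j : ℝ), Real.exp_nat_mul] at h5
        calc (1 + (j : ℝ)) ^ α * t ^ j
            ≤ δ ^ (-α) * (Real.exp 1 * Real.exp (-δ) ^ j) :=
              mul_le_mul h2 h4 (by positivity) (by positivity)
          _ = δ ^ (-α) * Real.exp 1 * Real.exp (-δ) ^ j := by ring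
      have hr0 : (0 : ℝ) ≤ Real.exp (-δ) := (Real.exp_pos _).le
      have hr1 : Real.exp (-δ) < 1 := Real.exp_lt_one_iff.2 (by linarith)
      have hgeom : ∑ j ∈ range (n + 1), Real.exp (-δ) ^ j ≤ 2 * δ⁻¹ := by
        calc ∑ j ∈ range (n + 1), Real.exp (-δ) ^ j ≤ (1 - Real.exp (-δ))⁻¹ :=
            geom_le hr0 hr1 _
          _ ≤ 2 * δ⁻¹ := by
            have h1 := one_sub_exp_neg (x := δ) hδpos.le (by linarith)
            calc (1 - Real.exp (-δ))⁻¹ ≤ (δ / 2)⁻¹ := inv_anti₀ (by linarith) h1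
              _ = 2 * δ⁻¹ := by rw [div_eq_mul_inv, mul_inv, inv_inv]; ring
      calc ∑ j ∈ (range (n + 1)).filter (fun j => ¬ j ≤ J), (1 + (j : ℝ)) ^ α * t ^ j
          ≤ ∑ j ∈ (range (n + 1)).filter (fun j => ¬ j ≤ J),
              δ ^ (-α) * Real.exp 1 * Real.exp (-δ) ^ j := Finset.sum_le_sum hterm
        _ ≤ ∑ j ∈ range (n + 1), δ ^ (-α) * Real.exp 1 * Real.exp (-δ) ^ j := by
            apply Finset.sum_le_sum_of_subset_of_nonneg (Finset.filter_subset _ _)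
            intro j _ _
            positivity
        _ = δ ^ (-α) * Real.exp 1 * ∑ j ∈ range (n + 1), Real.exp (-δ) ^ j := by
            rw [Finset.mul_sum]
        _ ≤ δ ^ (-α) * Real.exp 1 * (2 * δ⁻¹) := by
            apply mul_le_mul_of_nonneg_left hgeom
            positivity
        _ = 2 * Real.exp 1 * δ ^ (-(α + 1)) := by rw [hsplit]; ring
    have hfin : ((2 : ℝ) ^ (-α) * 4 ^ (α + 1) / (α + 1) + 2 * Real.exp 1) * δ ^ (-(α + 1)) =
        (2 : ℝ) ^ (-α) * 4 ^ (α + 1) / (α + 1) * δ ^ (-(α + 1)) +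
          2 * Real.exp 1 * δ ^ (-(α + 1)) := by ring
    rw [hfin]
    exact add_le_add part1 part2

lemma lower_core (γ : ℝ) (hγ : -1 < γ) :
    ∃ cl : ℝ, 0 < cl ∧ ∀ n : ℕ, 1 ≤ n → ∀ t : ℝ, t ≤ 1 →
      1 + 1 / (n : ℝ) - t ≤ 1 / 8 →
      ∃ a : ℕ, (8 * (1 + 1 / (n : ℝ) - t))⁻¹ ≤ (a : ℝ) ∧
        (a : ℝ) ≤ (8 * (1 + 1 / (n : ℝ) - t))⁻¹ + 1 ∧
        min ((8 : ℝ) ^ (-γ)) 1 * Real.exp (-2) / 8 * (1 + 1 / (n : ℝ) - t) ^ (-(γ + 1)) ≤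
          ∑ j ∈ Finset.Icc a (2 * a), (1 + (j : ℝ)) ^ γ * t ^ (2 * j) := by
  have hq : (0 : ℝ) < min ((8 : ℝ) ^ (-γ)) 1 := by
    apply lt_min _ one_pos
    exact Real.rpow_pos_of_pos (by norm_num) _
  refine ⟨min ((8 : ℝ) ^ (-γ)) 1 * Real.exp (-2) / 8, by positivity, ?_⟩
  intro n hn t ht1 hδ8
  set q : ℝ := min ((8 : ℝ) ^ (-γ)) 1 with hqdef
  obtain ⟨δ, hδdef⟩ : ∃ δ : ℝ, δ = 1 + 1 / (n : ℝ) - t := ⟨_, rfl⟩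
  rw [← hδdef] at hδ8 ⊢
  have hnpos : (0 : ℝ) < (n : ℝ) := by exact_mod_cast Nat.pos_of_ne_zero (by omega)
  have hδpos : 0 < δ := by
    have : 0 < 1 / (n : ℝ) := by positivity
    rw [hδdef]
    linarith
  have h1n : (0 : ℝ) < 1 / (n : ℝ) := by positivity
  have hδ8' : δ ≤ 1 / 8 := hδ8
  have htδ : t = 1 + 1 / (n : ℝ) - δ := by rw [hδdef]; ring
  have hδinv8 : (8 : ℝ) ≤ δ⁻¹ := by
    rw [show (8 : ℝ) = (1 / 8)⁻¹ by norm_num]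
    exact inv_anti₀ hδpos hδ8'
  have ht0 : (0 : ℝ) ≤ t := by rw [htδ]; linarith
  have ht7 : 1 - δ ≤ t := by rw [htδ]; linarith
  obtain ⟨a, hadef⟩ : ∃ a : ℕ, a = ⌈(8 * δ)⁻¹⌉₊ := ⟨_, rfl⟩
  have ha1 : (8 * δ)⁻¹ ≤ (a : ℝ) := by rw [hadef]; exact Nat.le_ceil _
  have ha2 : (a : ℝ) ≤ (8 * δ)⁻¹ + 1 := by
    rw [hadef]; exact (Nat.ceil_lt_add_one (by positivity)).le
  refine ⟨a, ha1, ha2, ?_⟩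
  -- exponential lower bound for t ^ (2j)
  have hexp2δ : Real.exp (-(2 * δ)) ≤ t := by
    have h1 : Real.exp (-(2 * δ)) ≤ (1 + 2 * δ)⁻¹ := by
      rw [Real.exp_neg]
      apply inv_anti₀ (by linarith)
      linarith [Real.add_one_le_exp (2 * δ)]
    have h2 : (1 + 2 * δ)⁻¹ ≤ 1 - δ := by
      rw [inv_le_iff_one_le_mul₀ (by linarith)]
      nlinarith [mul_nonneg (sub_nonneg.2 hδ8') hδpos.le]
    linarith
  have htexp : ∀ j ∈ Finset.Icc a (2 * a), Real.exp (-2) ≤ t ^ (2 * j) := by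
    intro j hj
    rw [Finset.mem_Icc] at hj
    have h1 : t ^ (4 * a) ≤ t ^ (2 * j) :=
      pow_le_pow_of_le_one ht0 ht1 (by omega)
    have h2 : Real.exp (-(2 * δ)) ^ (4 * a) ≤ t ^ (4 * a) :=
      pow_le_pow_left₀ (Real.exp_pos _).le hexp2δ _
    have h3 : Real.exp (-(2 * δ)) ^ (4 * a) = Real.exp (((4 * a : ℕ) : ℝ) * (-(2 * δ))) := by
      rw [Real.exp_nat_mul]
    have h4 : Real.exp (-2) ≤ Real.exp (((4 * a : ℕ) : ℝ) * (-(2 * δ))) := by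
      apply Real.exp_le_exp.2
      have hc : ((4 * a : ℕ) : ℝ) = 4 * (a : ℝ) := by push_cast; ring
      rw [hc]
      have h8 : 8 * (a : ℝ) * δ ≤ 2 := by
        have e1 : (8 * δ)⁻¹ = 8⁻¹ * δ⁻¹ := by rw [mul_inv]
        have h9 : (a : ℝ) * δ ≤ ((8 * δ)⁻¹ + 1) * δ :=
          mul_le_mul_of_nonneg_right ha2 hδpos.le
        have h10 : ((8 * δ)⁻¹ + 1) * δ = 8⁻¹ + δ := by
          field_simp
        have h11 : (a : ℝ) * δ ≤ 8⁻¹ + δ := h9.trans (le_of_eq h10)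
        nlinarith [h11, hδ8']
      nlinarith
    calc Real.exp (-2) ≤ Real.exp (((4 * a : ℕ) : ℝ) * (-(2 * δ))) := h4
      _ = Real.exp (-(2 * δ)) ^ (4 * a) := h3.symm
      _ ≤ t ^ (4 * a) := h2
      _ ≤ t ^ (2 * j) := h1
  -- rpow lower bound
  have hjbound : ∀ j ∈ Finset.Icc a (2 * a), q * δ ^ (-γ) ≤ (1 + (j : ℝ)) ^ γ := by
    intro j hj
    rw [Finset.mem_Icc] at hj
    have hja : (a : ℝ) ≤ (j : ℝ) := by exact_mod_cast hj.1
    have hja2 : (j : ℝ) ≤ 2 * (a : ℝ) := by exact_mod_cast hj.2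
    have hlow : (8 * δ)⁻¹ ≤ 1 + (j : ℝ) := by linarith
    have hhigh : 1 + (j : ℝ) ≤ δ⁻¹ := by
      have e1 : (8 * δ)⁻¹ = 8⁻¹ * δ⁻¹ := by rw [mul_inv]
      have : 1 + (j : ℝ) ≤ 1 + 2 * ((8 * δ)⁻¹ + 1) := by linarith
      rw [e1] at this
      linarith
    have hjpos : (0 : ℝ) < 1 + (j : ℝ) := by positivity
    rcases le_or_gt 0 γ with hγ0 | hγ0
    · have h1 : ((8 * δ)⁻¹) ^ γ ≤ (1 + (j : ℝ)) ^ γ :=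
        Real.rpow_le_rpow (by positivity) hlow hγ0
      have h2 : ((8 * δ)⁻¹) ^ γ = 8 ^ (-γ) * δ ^ (-γ) := by
        rw [Real.inv_rpow (by positivity), ← Real.rpow_neg (by positivity),
          Real.mul_rpow (by norm_num) hδpos.le]
      have h3 : q * δ ^ (-γ) ≤ 8 ^ (-γ) * δ ^ (-γ) := by
        apply mul_le_mul_of_nonneg_right (min_le_left _ _)
        exact (Real.rpow_pos_of_pos hδpos _).le
      rw [h2] at h1
      linarith
    · have h1 : (δ⁻¹) ^ γ ≤ (1 + (j : ℝ)) ^ γ :=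
        Real.rpow_le_rpow_of_nonpos hjpos hhigh hγ0.le
      have h2 : (δ⁻¹) ^ γ = δ ^ (-γ) := by
        rw [Real.inv_rpow hδpos.le, ← Real.rpow_neg hδpos.le]
      have h3 : q * δ ^ (-γ) ≤ δ ^ (-γ) := by
        have := (Real.rpow_pos_of_pos hδpos (-γ)).le
        nlinarith [min_le_right ((8 : ℝ) ^ (-γ)) 1]
      rw [h2] at h1
      linarith
  -- combine
  have hterm : ∀ j ∈ Finset.Icc a (2 * a),
      q * Real.exp (-2) * δ ^ (-γ) ≤ (1 + (j : ℝ)) ^ γ * t ^ (2 * j) := by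
    intro j hj
    have h1 := hjbound j hj
    have h2 := htexp j hj
    have hδγ := (Real.rpow_pos_of_pos hδpos (-γ)).le
    calc q * Real.exp (-2) * δ ^ (-γ) = (q * δ ^ (-γ)) * Real.exp (-2) := by ring
      _ ≤ (1 + (j : ℝ)) ^ γ * t ^ (2 * j) :=
        mul_le_mul h1 h2 (Real.exp_pos _).le (by positivity)
  have hcard : ((Finset.Icc a (2 * a)).card : ℝ) = (a : ℝ) + 1 := by
    rw [Nat.card_Icc]
    push_cast [show 2 * a + 1 - a = a + 1 by omega]
    ring
  have hsum : ((Finset.Icc a (2 * a)).card : ℝ) * (q * Real.exp (-2) * δ ^ (-γ)) ≤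
      ∑ j ∈ Finset.Icc a (2 * a), (1 + (j : ℝ)) ^ γ * t ^ (2 * j) := by
    have := Finset.card_nsmul_le_sum (Finset.Icc a (2 * a))
      (fun j => (1 + (j : ℝ)) ^ γ * t ^ (2 * j)) (q * Real.exp (-2) * δ ^ (-γ)) hterm
    simpa [nsmul_eq_mul] using this
  have hsplit : δ ^ (-(γ + 1)) = δ ^ (-γ) * δ⁻¹ := by
    rw [show -(γ + 1) = -γ + -1 by ring, Real.rpow_add hδpos, Real.rpow_neg_one]
  have hfinal : q * Real.exp (-2) / 8 * δ ^ (-(γ + 1)) ≤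
      ((a : ℝ) + 1) * (q * Real.exp (-2) * δ ^ (-γ)) := by
    have e1 : (8 * δ)⁻¹ = 8⁻¹ * δ⁻¹ := by rw [mul_inv]
    have ha3 : 8⁻¹ * δ⁻¹ ≤ (a : ℝ) + 1 := by
      rw [← e1]
      linarith
    have hpos : (0 : ℝ) ≤ q * Real.exp (-2) * δ ^ (-γ) := by positivity
    calc q * Real.exp (-2) / 8 * δ ^ (-(γ + 1))
        = (8⁻¹ * δ⁻¹) * (q * Real.exp (-2) * δ ^ (-γ)) := by rw [hsplit]; ring
      _ ≤ ((a : ℝ) + 1) * (q * Real.exp (-2) * δ ^ (-γ)) :=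
        mul_le_mul_of_nonneg_right ha3 hpos
  rw [hcard] at hsum
  exact hfinal.trans hsum
end Stmt18Aux


/-- 'Small mean' domination for generalized Kac polynomials: if `|b_j| ≤ M(1+j)^{ρ'}` with
`ρ' ∈ (−1, ρ − 1/2)` and `|c_j| ≥ m(1+j)^ρ` for `K ≤ j ≤ n − K`, where `ρ > −1/2`, then there
are constants `C, c'', C' > 0` such that for all large `n` and `t ∈ [1 − 1/C, 1]`, with
`δ = 1 + 1/n − t`: `|∑ b_j t^j| ≤ C δ^{−(ρ'+1)}`, `(∑ c_j² t^{2j})^{1/2} ≥ c'' δ^{−(ρ+1/2)}`,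
and hence `|m_n(t)| ≤ C' δ^{ρ−ρ'−1/2} (Var[r_n(t)])^{1/2}`. -/
theorem stmt_18 (ρ ρ' mm MM KK : ℝ) (hρ : -(1 / 2) < ρ) (hρ'1 : -1 < ρ')
    (hρ'2 : ρ' < ρ - 1 / 2) (hmm : 0 < mm) (hMM : 0 < MM) (hKK : 0 < KK) :
    ∃ C c'' C' : ℝ, 0 < C ∧ 0 < c'' ∧ 0 < C' ∧
      ∃ N₀ : ℕ, ∀ n : ℕ, N₀ ≤ n → ∀ b cf : ℕ → ℝ,
        (∀ j ≤ n, |b j| ≤ MM * (1 + (j : ℝ)) ^ ρ') →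
        (∀ j ≤ n, KK ≤ (j : ℝ) → (j : ℝ) ≤ (n : ℝ) - KK → mm * (1 + (j : ℝ)) ^ ρ ≤ |cf j|) →
        ∀ t : ℝ, 1 - 1 / C ≤ t → t ≤ 1 →
          |∑ j ∈ Finset.range (n + 1), b j * t ^ j| ≤
              C * (1 + 1 / (n : ℝ) - t) ^ (-(ρ' + 1)) ∧
          c'' * (1 + 1 / (n : ℝ) - t) ^ (-(ρ + 1 / 2)) ≤
              Real.sqrt (∑ j ∈ Finset.range (n + 1), (cf j) ^ 2 * t ^ (2 * j)) ∧
          |∑ j ∈ Finset.range (n + 1), b j * t ^ j| ≤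
              C' * (1 + 1 / (n : ℝ) - t) ^ (ρ - ρ' - 1 / 2) *
                Real.sqrt (∑ j ∈ Finset.range (n + 1), (cf j) ^ 2 * t ^ (2 * j)) := by
  obtain ⟨Cu, hCu, hupper⟩ := Stmt18Aux.upper_bound ρ' hρ'1
  have h2ρ : (-1 : ℝ) < 2 * ρ := by linarith
  obtain ⟨cl0, hcl0, hlower⟩ := Stmt18Aux.lower_core (2 * ρ) h2ρ
  set cl : ℝ := min ((8 : ℝ) ^ (-(2 * ρ))) 1 * Real.exp (-2) / 8 with hcldef
  have hcl : 0 < cl := by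
    have : (0 : ℝ) < min ((8 : ℝ) ^ (-(2 * ρ))) 1 :=
      lt_min (Real.rpow_pos_of_pos (by norm_num) _) one_pos
    positivity
  set C : ℝ := max (MM * Cu) (16 * KK + 16) with hCdef
  have hC16 : 16 * KK + 16 ≤ C := le_max_right _ _
  have hCpos : 0 < C := lt_of_lt_of_le (by linarith) hC16
  set c'' : ℝ := Real.sqrt (mm ^ 2 * cl) with hc''def
  have hc'' : 0 < c'' := Real.sqrt_pos.2 (by positivity)
  refine ⟨C, c'', C / c'', hCpos, hc'', by positivity, ⌈16 * KK + 16⌉₊, ?_⟩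
  intro n hN b cf hb hcf t htC ht1
  have hn16 : (16 * KK + 16 : ℝ) ≤ (n : ℝ) :=
    le_trans (Nat.le_ceil _) (Nat.cast_le.2 hN)
  have hnR : (0 : ℝ) < (n : ℝ) := by linarith
  have hn1 : 1 ≤ n := by
    rcases Nat.eq_zero_or_pos n with h | h
    · rw [h] at hnR; norm_num at hnR
    · exact h
  obtain ⟨δ, hδdef⟩ : ∃ δ : ℝ, δ = 1 + 1 / (n : ℝ) - t := ⟨_, rfl⟩
  rw [← hδdef]
  have h1n : 0 < 1 / (n : ℝ) := by positivity
  have hδpos : 0 < δ := by rw [hδdef]; linarith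
  have hδn : 1 / (n : ℝ) ≤ δ := by rw [hδdef]; linarith
  have h1C : 1 / C ≤ 1 / (16 * KK + 16) :=
    one_div_le_one_div_of_le (by linarith) hC16
  have h1nK : 1 / (n : ℝ) ≤ 1 / (16 * KK + 16) :=
    one_div_le_one_div_of_le (by linarith) hn16
  have hδle : δ ≤ 2 / (16 * KK + 16) := by
    rw [hδdef]
    have : 1 - t ≤ 1 / C := by linarith
    have h2 : 2 / (16 * KK + 16) = 1 / (16 * KK + 16) + 1 / (16 * KK + 16) := by ring
    linarith
  have hKKd : 2 / (16 * KK + 16) ≤ 1 / (8 * KK) := by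
    rw [div_le_div_iff₀ (by linarith) (by linarith)]
    nlinarith
  have hδ8 : δ ≤ 1 / 8 := by
    have : 2 / (16 * KK + 16) ≤ 2 / 16 := by
      apply div_le_div_of_nonneg_left (by norm_num) (by norm_num) (by linarith)
    linarith
  have hδK : δ ≤ 1 / (8 * KK) := hδle.trans hKKd
  have ht0 : 0 ≤ t := by
    have : 1 / C ≤ 1 / 16 := by
      apply one_div_le_one_div_of_le (by norm_num)
      linarith
    linarith
  -- Part 1 : upper bound on |m_n(t)|
  have hub : ∑ j ∈ Finset.range (n + 1), (1 + (j : ℝ)) ^ ρ' * t ^ j ≤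
      Cu * δ ^ (-(ρ' + 1)) := by
    have := hupper n hn1 t ht0 ht1 (by rw [← hδdef]; linarith)
    rwa [← hδdef] at this
  have habs : |∑ j ∈ Finset.range (n + 1), b j * t ^ j| ≤
      MM * ∑ j ∈ Finset.range (n + 1), (1 + (j : ℝ)) ^ ρ' * t ^ j := by
    calc |∑ j ∈ Finset.range (n + 1), b j * t ^ j|
        ≤ ∑ j ∈ Finset.range (n + 1), |b j * t ^ j| :=
          Finset.abs_sum_le_sum_abs _ _
      _ ≤ ∑ j ∈ Finset.range (n + 1), MM * ((1 + (j : ℝ)) ^ ρ' * t ^ j) := by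
          apply Finset.sum_le_sum
          intro j hj
          rw [Finset.mem_range] at hj
          rw [abs_mul, abs_pow, abs_of_nonneg ht0, ← mul_assoc]
          exact mul_le_mul_of_nonneg_right (hb j (by omega)) (pow_nonneg ht0 j)
      _ = MM * ∑ j ∈ Finset.range (n + 1), (1 + (j : ℝ)) ^ ρ' * t ^ j := by
          rw [Finset.mul_sum]
  have hδρ' : (0 : ℝ) ≤ δ ^ (-(ρ' + 1)) := (Real.rpow_pos_of_pos hδpos _).le
  have part1 : |∑ j ∈ Finset.range (n + 1), b j * t ^ j| ≤ C * δ ^ (-(ρ' + 1)) := by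
    calc |∑ j ∈ Finset.range (n + 1), b j * t ^ j|
        ≤ MM * ∑ j ∈ Finset.range (n + 1), (1 + (j : ℝ)) ^ ρ' * t ^ j := habs
      _ ≤ MM * (Cu * δ ^ (-(ρ' + 1))) := mul_le_mul_of_nonneg_left hub hMM.le
      _ = MM * Cu * δ ^ (-(ρ' + 1)) := by ring
      _ ≤ C * δ ^ (-(ρ' + 1)) :=
          mul_le_mul_of_nonneg_right (le_max_left _ _) hδρ'
  -- Part 2 : lower bound on the variance
  obtain ⟨a, ha1, ha2, hsuml⟩ := hlower n hn1 t ht1 (by rw [← hδdef]; exact hδ8)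
  rw [← hδdef] at ha1 ha2 hsuml
  have hδinvn : δ⁻¹ ≤ (n : ℝ) := by
    have := inv_anti₀ h1n hδn
    rwa [one_div, inv_inv] at this
  have ha8 : (8 * δ)⁻¹ = 8⁻¹ * δ⁻¹ := by rw [mul_inv]
  have haU : (a : ℝ) ≤ (n : ℝ) / 8 + 1 := by
    rw [ha8] at ha2
    have : 8⁻¹ * δ⁻¹ ≤ 8⁻¹ * (n : ℝ) := by
      apply mul_le_mul_of_nonneg_left hδinvn (by norm_num)
    calc (a : ℝ) ≤ 8⁻¹ * δ⁻¹ + 1 := ha2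
      _ ≤ 8⁻¹ * (n : ℝ) + 1 := by linarith
      _ = (n : ℝ) / 8 + 1 := by ring
  have h2an : 2 * a ≤ n := by
    have hr : (2 * (a : ℝ)) ≤ (n : ℝ) := by linarith
    exact_mod_cast (by push_cast; linarith : ((2 * a : ℕ) : ℝ) ≤ (n : ℝ))
  have hicc : Finset.Icc a (2 * a) ⊆ Finset.range (n + 1) := by
    intro j hj
    rw [Finset.mem_Icc] at hj
    rw [Finset.mem_range]
    omega
  have hKa : KK ≤ (8 * δ)⁻¹ := by
    have h8δ : 8 * δ ≤ 1 / KK := by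
      rw [div_eq_mul_inv, one_mul]
      have : 8 * δ ≤ 8 * (1 / (8 * KK)) := by linarith
      calc 8 * δ ≤ 8 * (1 / (8 * KK)) := this
        _ = KK⁻¹ := by field_simp
    have := inv_anti₀ (by positivity : (0:ℝ) < 8 * δ) h8δ
    calc KK = (1 / KK)⁻¹ := by rw [one_div, inv_inv]
      _ ≤ (8 * δ)⁻¹ := this
  have hcfsq : ∀ j ∈ Finset.Icc a (2 * a),
      mm ^ 2 * ((1 + (j : ℝ)) ^ (2 * ρ) * t ^ (2 * j)) ≤ (cf j) ^ 2 * t ^ (2 * j) := by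
    intro j hj
    rw [Finset.mem_Icc] at hj
    have hja : (a : ℝ) ≤ (j : ℝ) := by exact_mod_cast hj.1
    have hja2 : (j : ℝ) ≤ 2 * (a : ℝ) := by exact_mod_cast hj.2
    have hjKK : KK ≤ (j : ℝ) := by linarith
    have hjup : (j : ℝ) ≤ (n : ℝ) - KK := by
      have h1 : (j : ℝ) ≤ (n : ℝ) / 4 + 2 := by linarith
      nlinarith
    have hjn : j ≤ n := by omega
    have hcfj := hcf j hjn hjKK hjup
    have hjpos : (0 : ℝ) < 1 + (j : ℝ) := by positivity
    have hsq : (mm * (1 + (j : ℝ)) ^ ρ) ^ 2 ≤ (cf j) ^ 2 := by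
      have h1 : (mm * (1 + (j : ℝ)) ^ ρ) ^ 2 ≤ |cf j| ^ 2 := by
        apply pow_le_pow_left₀ (by positivity) hcfj
      rwa [sq_abs] at h1
    have hexp : (mm * (1 + (j : ℝ)) ^ ρ) ^ 2 = mm ^ 2 * (1 + (j : ℝ)) ^ (2 * ρ) := by
      rw [mul_pow, sq ((1 + (j : ℝ)) ^ ρ), ← Real.rpow_add hjpos]
      ring_nf
    rw [hexp] at hsq
    have htp : (0 : ℝ) ≤ t ^ (2 * j) := by positivity
    calc mm ^ 2 * ((1 + (j : ℝ)) ^ (2 * ρ) * t ^ (2 * j))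
        = (mm ^ 2 * (1 + (j : ℝ)) ^ (2 * ρ)) * t ^ (2 * j) := by ring
      _ ≤ (cf j) ^ 2 * t ^ (2 * j) := mul_le_mul_of_nonneg_right hsq htp
  have hSlow : mm ^ 2 * cl * δ ^ (-(2 * ρ + 1)) ≤
      ∑ j ∈ Finset.range (n + 1), (cf j) ^ 2 * t ^ (2 * j) := by
    calc mm ^ 2 * cl * δ ^ (-(2 * ρ + 1))
        = mm ^ 2 * (cl * δ ^ (-(2 * ρ + 1))) := by ring
      _ ≤ mm ^ 2 * ∑ j ∈ Finset.Icc a (2 * a), (1 + (j : ℝ)) ^ (2 * ρ) * t ^ (2 * j) := by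
          apply mul_le_mul_of_nonneg_left _ (by positivity)
          exact hsuml
      _ = ∑ j ∈ Finset.Icc a (2 * a), mm ^ 2 * ((1 + (j : ℝ)) ^ (2 * ρ) * t ^ (2 * j)) := by
          rw [Finset.mul_sum]
      _ ≤ ∑ j ∈ Finset.Icc a (2 * a), (cf j) ^ 2 * t ^ (2 * j) :=
          Finset.sum_le_sum hcfsq
      _ ≤ ∑ j ∈ Finset.range (n + 1), (cf j) ^ 2 * t ^ (2 * j) := by
          apply Finset.sum_le_sum_of_subset_of_nonneg hicc
          intro j _ _
          positivity
  have hδhalf : (0 : ℝ) ≤ δ ^ (-(ρ + 1 / 2)) := (Real.rpow_pos_of_pos hδpos _).le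
  have hsq2 : δ ^ (-(2 * ρ + 1)) = (δ ^ (-(ρ + 1 / 2))) ^ 2 := by
    rw [← Real.rpow_natCast (δ ^ (-(ρ + 1 / 2))) 2, ← Real.rpow_mul hδpos.le]
    norm_num
    ring_nf
  have part2 : c'' * δ ^ (-(ρ + 1 / 2)) ≤
      Real.sqrt (∑ j ∈ Finset.range (n + 1), (cf j) ^ 2 * t ^ (2 * j)) := by
    have h1 : Real.sqrt (mm ^ 2 * cl * δ ^ (-(2 * ρ + 1))) ≤
        Real.sqrt (∑ j ∈ Finset.range (n + 1), (cf j) ^ 2 * t ^ (2 * j)) :=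
      Real.sqrt_le_sqrt hSlow
    have h2 : Real.sqrt (mm ^ 2 * cl * δ ^ (-(2 * ρ + 1))) = c'' * δ ^ (-(ρ + 1 / 2)) := by
      rw [hsq2, Real.sqrt_mul (by positivity), Real.sqrt_sq hδhalf, hc''def]
    rwa [h2] at h1
  refine ⟨part1, part2, ?_⟩
  -- Part 3
  have hsplit : δ ^ (-(ρ' + 1)) = δ ^ (ρ - ρ' - 1 / 2) * δ ^ (-(ρ + 1 / 2)) := by
    rw [← Real.rpow_add hδpos]
    ring_nf
  have hδmid : (0 : ℝ) ≤ δ ^ (ρ - ρ' - 1 / 2) := (Real.rpow_pos_of_pos hδpos _).le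
  calc |∑ j ∈ Finset.range (n + 1), b j * t ^ j|
      ≤ C * δ ^ (-(ρ' + 1)) := part1
    _ = C / c'' * δ ^ (ρ - ρ' - 1 / 2) * (c'' * δ ^ (-(ρ + 1 / 2))) := by
        rw [hsplit]
        field_simp
    _ ≤ C / c'' * δ ^ (ρ - ρ' - 1 / 2) *
          Real.sqrt (∑ j ∈ Finset.range (n + 1), (cf j) ^ 2 * t ^ (2 * j)) := by
        apply mul_le_mul_of_nonneg_left part2
        positivity
end
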